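/- arXiv:1403.0207 — 8 statements merged into one kernel-verified Lean document; each statement's English description precedes it below -/
import Mathlib

section
/- Assume the measure-equivalence data above together with the amenability hypothesis on the pair (Γ, X). If Δ has the Haagerup property — i.e. there are positive definite functions u_n : Δ → ℂ with u_n(e) = 1, each vanishing at infinity (for every ε > 0 the set {d ∈ Δ : |u_n(d)| ≥ ε} is finite), and u_n(d) → 1 as n → ∞ for every d ∈ Δ — then Γ has the Haagerup property: there are positive definite functions v_n : Γ → ℂ with v_n(e) = 1, each vanishing at infinity, and v_n(γ) → 1 for every γ ∈ Γ. -/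
/-!
Write `T γ x = γ·x·α(γ,x)⁻¹` for the induced action on `(X, μ)`. For a normalized positive
definite `u` on `Δ` and `g ∈ L²(μ)`, the function
`γ ↦ ∫ g(T γ⁻¹ x) g(x) u(α(γ⁻¹,x)⁻¹) dμ` is positive definite on `Γ`: after the substitution
`x = T γⱼ⁻¹ y` the cocycle identity turns each quadratic form into the integral of a quadratic
form of `u`. With `g = √φ` for a density `φ` that is almost invariant on a finite set `E`,
this function is close to `∫ g(T γ⁻¹ x) g(x) dμ ≈ 1` on `E` once `u` is close to `1`.

For vanishing at infinity, truncate `φ` to finitely many translates `F • Y` of the fundamental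
domain of `Γ`. Then a point `x` has `α(γ⁻¹,x) = δ` and `T γ⁻¹ x ∈ F • Y` for at most `#F`
elements `γ`, because `T γ⁻¹ x = γ⁻¹·(x·δ⁻¹)`. So, for each `δ`, the mass of
`{x | α(γ⁻¹,x) = δ}` in the coefficient is summable in `γ`, while `u` is small outside a finite
set of `δ`. A diagonal argument over the countable group `Γ` produces the sequence.
-/

open MeasureTheory Filter Set
open scoped ComplexOrder

/-- A function `u : G → ℂ` on a group is positive definite. -/
def IsPosDefFn {G : Type*} [Group G] (u : G → ℂ) : Prop :=
  ∀ (n : ℕ) (g : Fin n → G) (c : Fin n → ℂ),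
    0 ≤ ∑ i, ∑ j, c i * (starRingEnd ℂ) (c j) * u ((g j)⁻¹ * g i)

open Topology Finset ComplexConjugate
open scoped Pointwise

namespace IsPosDefFn

variable {G : Type*} [Group G] {u : G → ℂ}

theorem two_point_nonneg (hu : IsPosDefFn u) (hu1 : u 1 = 1) (g : G) (z : ℂ) :
    0 ≤ 1 + z * conj z + conj z * u g⁻¹ + z * u g := by
  have h := hu 2 ![1, g] ![1, z]
  simp only [Fin.sum_univ_two, Matrix.cons_val_zero, Matrix.cons_val_one, inv_one, mul_one,
    one_mul, inv_mul_cancel, hu1, map_one] at h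
  convert h using 1
  ring

theorem apply_inv (hu : IsPosDefFn u) (hu1 : u 1 = 1) (g : G) : u g⁻¹ = conj (u g) := by
  have h₁ := (Complex.nonneg_iff.1 (hu.two_point_nonneg hu1 g 1)).2
  have h₂ := (Complex.nonneg_iff.1 (hu.two_point_nonneg hu1 g Complex.I)).2
  simp only [map_one, mul_one, one_mul, Complex.add_im, Complex.one_im, add_zero, zero_add,
    Complex.conj_I, mul_neg, Complex.I_mul_I, neg_neg, neg_mul, Complex.neg_im, Complex.mul_im,
    Complex.I_re, zero_mul, Complex.I_im] at h₁ h₂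
  apply Complex.ext
  · rw [Complex.conj_re]; linarith
  · rw [Complex.conj_im]; linarith

theorem norm_le_one (hu : IsPosDefFn u) (hu1 : u 1 = 1) (g : G) : ‖u g‖ ≤ 1 := by
  have h := (Complex.nonneg_iff.1 (hu.two_point_nonneg hu1 g (-conj (u g)))).1
  rw [hu.apply_inv hu1] at h
  simp only [map_neg, Complex.conj_conj, mul_neg, neg_mul, neg_neg, Complex.add_re,
    Complex.one_re, Complex.mul_re, Complex.conj_re, Complex.conj_im, sub_neg_eq_add,
    Complex.neg_re, neg_add_rev] at h
  have hsq : ‖u g‖ ^ 2 = (u g).re ^ 2 + (u g).im ^ 2 := by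
    rw [Complex.sq_norm, Complex.normSq_apply]; ring
  nlinarith [norm_nonneg (u g)]

end IsPosDefFn

theorem exists_seq_forall_tendsto_of_forall_finset {ι E : Type*} [Countable ι]
    [PseudoMetricSpace E] {P : (ι → E) → Prop} {φ : ι → E}
    (h : ∀ (s : Finset ι) (ε : ℝ), 0 < ε → ∃ w, P w ∧ ∀ i ∈ s, dist (w i) (φ i) < ε) :
    ∃ v : ℕ → ι → E, (∀ n, P (v n)) ∧ ∀ i, Tendsto (fun n => v n i) atTop (𝓝 (φ i)) := by
  classical
  choose w hwP hw using fun p : Finset ι × ℕ => h p.1 (1 / (p.2 + 1)) Nat.one_div_pos_of_nat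
  obtain ⟨x, hx⟩ := exists_seq_tendsto (atTop : Filter (Finset ι × ℕ))
  refine ⟨fun n => w (x n), fun n => hwP _, fun i => ?_⟩
  suffices Tendsto (fun p => w p i) atTop (𝓝 (φ i)) from this.comp hx
  refine Metric.tendsto_nhds.2 fun ε hε => ?_
  obtain ⟨N, hN⟩ := exists_nat_one_div_lt hε
  filter_upwards [eventually_ge_atTop ({i}, N)] with p hp
  refine (hw p i (hp.1 (mem_singleton_self i))).trans_le (hN.le.trans' ?_)
  gcongr
  exact hp.2

theorem tendsto_cofinite_zero_iff_finite_setOf_le_norm {ι E : Type*} [SeminormedAddGroup E]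
    {f : ι → E} : Tendsto f cofinite (𝓝 0) ↔ ∀ ε : ℝ, 0 < ε → {i | ε ≤ ‖f i‖}.Finite := by
  simp only [Metric.tendsto_nhds, dist_zero_right, eventually_cofinite, not_lt]

theorem MeasureTheory.MeasurePreserving.integral_comp_of_aestronglyMeasurable {α β G : Type*}
    [NormedAddCommGroup G] [NormedSpace ℝ G] [MeasurableSpace α] [MeasurableSpace β]
    {μ : Measure α} {ν : Measure β} {τ : α → β} (hτ : MeasurePreserving τ μ ν) {g : β → G}
    (hg : AEStronglyMeasurable g ν) : ∫ x, g (τ x) ∂μ = ∫ y, g y ∂ν := by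
  rw [← hτ.map_eq] at hg ⊢
  exact (integral_map hτ.aemeasurable hg).symm

open Classical in
theorem sum_integral_indicator_le {ι α : Type*} [MeasurableSpace α] {μ : Measure α}
    {s : Finset ι} {B : ι → Set α} (hB : ∀ i, MeasurableSet (B i)) {φ : α → ℝ}
    (hφ : Integrable φ μ) (hφ0 : 0 ≤ φ) {N : ℕ} (hN : ∀ x, #{i ∈ s | x ∈ B i} ≤ N) :
    ∑ i ∈ s, ∫ x, (B i).indicator φ x ∂μ ≤ N * ∫ x, φ x ∂μ := by
  rw [← integral_finsetSum _ fun i _ => hφ.indicator (hB i), ← integral_const_mul]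
  refine integral_mono (integrable_finsetSum _ fun i _ => hφ.indicator (hB i))
    (hφ.const_mul _) fun x => ?_
  simp only [indicator_apply]
  rw [← Finset.sum_filter, Finset.sum_const, nsmul_eq_mul]
  exact mul_le_mul_of_nonneg_right (by exact_mod_cast hN x) (hφ0 x)

theorem exists_finset_lt_setIntegral_biUnion {ι α : Type*} [Countable ι] [MeasurableSpace α]
    {μ : Measure α} {W : ι → Set α} (hW : ∀ i, MeasurableSet (W i)) (hcover : ⋃ i, W i = univ)
    {f : α → ℝ} (hf : Integrable f μ) {a : ℝ} (ha : a < ∫ x, f x ∂μ) :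
    ∃ F : Finset ι, a < ∫ x in ⋃ i ∈ F, W i, f x ∂μ := by
  have hmono : Monotone fun F : Finset ι => ⋃ i ∈ F, W i := fun _ _ h =>
    biUnion_mono h fun _ _ => le_rfl
  have hunion : ⋃ F : Finset ι, ⋃ i ∈ F, W i = univ := by
    rw [eq_univ_iff_forall] at hcover ⊢
    intro x
    obtain ⟨i, hi⟩ := mem_iUnion.1 (hcover x)
    exact mem_iUnion.2 ⟨{i}, by simpa using hi⟩
  have hlim := tendsto_setIntegral_of_monotone (μ := μ) (f := f)
    (fun F => F.measurableSet_biUnion fun i _ => hW i) hmono (by rw [hunion]; exact hf.integrableOn)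
  rw [hunion, setIntegral_univ] at hlim
  exact (hlim.eventually (lt_mem_nhds ha)).exists

theorem abs_indicator_sub_indicator_le {α : Type*} {f : α → ℝ} (hf0 : 0 ≤ f) (S : Set α)
    (a b : α) :
    |S.indicator f a - S.indicator f b| ≤
      |f a - f b| + (f a - S.indicator f a) + (f b - S.indicator f b) := by
  have ha0 : 0 ≤ f a := hf0 a
  have hb0 : 0 ≤ f b := hf0 b
  by_cases ha : a ∈ S <;> by_cases hb : b ∈ S <;>
    simp only [indicator_of_mem, indicator_of_notMem, ha, hb, not_false_eq_true] <;>
    rw [abs_le] <;> constructor <;> linarith [le_abs_self (f a - f b), neg_abs_le (f a - f b)]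

section MeasurePreserving

variable {α : Type*} [MeasurableSpace α] {μ : Measure α} {τ : α → α}

theorem integral_abs_indicator_comp_sub_le (hτ : MeasurePreserving τ μ μ) {f : α → ℝ}
    (hf : Integrable f μ) (hf0 : 0 ≤ f) {S : Set α} (hS : MeasurableSet S) :
    ∫ x, |S.indicator f (τ x) - S.indicator f x| ∂μ ≤
      ∫ x, |f (τ x) - f x| ∂μ + 2 * (∫ x, f x ∂μ - ∫ x in S, f x ∂μ) := by
  have hfS := hf.indicator hS
  have hfτ : Integrable (fun x => f (τ x)) μ := (hτ.integrable_comp hf.1).2 hf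
  have hfSτ : Integrable (fun x => S.indicator f (τ x)) μ := (hτ.integrable_comp hfS.1).2 hfS
  have hdiff : Integrable (fun x => |f (τ x) - f x|) μ := (hfτ.sub hf).abs
  have hrestτ : Integrable (fun x => f (τ x) - S.indicator f (τ x)) μ := hfτ.sub hfSτ
  have hrest : Integrable (fun x => f x - S.indicator f x) μ := hf.sub hfS
  have hsum : Integrable (fun x => |f (τ x) - f x| + (f (τ x) - S.indicator f (τ x))) μ :=
    hdiff.add hrestτ
  calc ∫ x, |S.indicator f (τ x) - S.indicator f x| ∂μ
      ≤ ∫ x, |f (τ x) - f x| + (f (τ x) - S.indicator f (τ x)) + (f x - S.indicator f x) ∂μ :=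
        integral_mono ((hfSτ.sub hfS).abs) (hsum.add hrest)
          fun x => abs_indicator_sub_indicator_le hf0 S (τ x) x
    _ = _ := by
      rw [integral_add hsum hrest, integral_add hdiff hrestτ, integral_sub hfτ hfSτ,
        integral_sub hf hfS, hτ.integral_comp_of_aestronglyMeasurable hf.1,
        hτ.integral_comp_of_aestronglyMeasurable hfS.1, integral_indicator hS]
      ring

theorem integrable_comp_mul {g : α → ℝ} (hg : MemLp g 2 μ) (hτ : MeasurePreserving τ μ μ) :
    Integrable (fun x => g (τ x) * g x) μ :=
  (hg.comp_measurePreserving hτ).integrable_mul hg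

theorem integral_comp_mul_le_integral_sq (hτ : MeasurePreserving τ μ μ) {g : α → ℝ}
    (hg : MemLp g 2 μ) : ∫ x, g (τ x) * g x ∂μ ≤ ∫ x, g x ^ 2 ∂μ := by
  have hg2τ : Integrable (fun x => g (τ x) ^ 2) μ := (hg.comp_measurePreserving hτ).integrable_sq
  calc ∫ x, g (τ x) * g x ∂μ ≤ ∫ x, (g (τ x) ^ 2 + g x ^ 2) / 2 ∂μ :=
        integral_mono (integrable_comp_mul hg hτ) ((hg2τ.add hg.integrable_sq).div_const 2)
          fun x => by nlinarith [sq_nonneg (g (τ x) - g x)]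
    _ = ∫ x, g x ^ 2 ∂μ := by
      rw [integral_div, integral_add hg2τ hg.integrable_sq,
        hτ.integral_comp_of_aestronglyMeasurable (g := fun x => g x ^ 2) hg.integrable_sq.1]
      ring

theorem integral_sq_sub_le_integral_comp_mul (hτ : MeasurePreserving τ μ μ) {g : α → ℝ}
    (hg : MemLp g 2 μ) (hg0 : 0 ≤ g) :
    ∫ x, g x ^ 2 ∂μ - ∫ x, |g (τ x) ^ 2 - g x ^ 2| ∂μ ≤ ∫ x, g (τ x) * g x ∂μ := by
  have hg2τ : Integrable (fun x => g (τ x) ^ 2) μ := (hg.comp_measurePreserving hτ).integrable_sq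
  have hdiff : Integrable (fun x => |g (τ x) ^ 2 - g x ^ 2|) μ := (hg2τ.sub hg.integrable_sq).abs
  rw [← integral_sub hg.integrable_sq hdiff]
  refine integral_mono (hg.integrable_sq.sub hdiff)
    (integrable_comp_mul hg hτ) fun x => ?_
  have ha : 0 ≤ g (τ x) := hg0 (τ x)
  have hb : 0 ≤ g x := hg0 x
  rcases le_total (g (τ x)) (g x) with h | h
  · rw [abs_of_nonpos (by nlinarith)]
    nlinarith
  · nlinarith [abs_nonneg (g (τ x) ^ 2 - g x ^ 2)]

end MeasurePreserving

theorem exists_density_supported_biUnion {α ι κ : Type*} [MeasurableSpace α] {μ : Measure α}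
    [Countable ι] {τ : κ → α → α} (hτ : ∀ k, MeasurePreserving (τ k) μ μ) {W : ι → Set α}
    (hW : ∀ i, MeasurableSet (W i)) (hcover : ⋃ i, W i = univ) {E : Finset κ}
    (h : ∀ η : ℝ, 0 < η → ∃ f : α → ℝ, Integrable f μ ∧ 0 ≤ f ∧ ∫ x, f x ∂μ = 1 ∧
      ∀ k ∈ E, ∫ x, |f (τ k x) - f x| ∂μ < η)
    {ε : ℝ} (hε : 0 < ε) :
    ∃ F : Finset ι, ∃ φ : α → ℝ, Integrable φ μ ∧ 0 ≤ φ ∧ ∫ x, φ x ∂μ = 1 ∧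
      (∀ x ∉ ⋃ i ∈ F, W i, φ x = 0) ∧ ∀ k ∈ E, ∫ x, |φ (τ k x) - φ x| ∂μ < ε := by
  -- `c := ∫_S f > 1 - η ≥ 6/7`, so `c⁻¹ 1_S f` moves by less than `c⁻¹ (η + 2η) ≤ 7η/2 < ε`.
  set η := min ε 1 / 7
  have hη : 0 < η := by positivity
  have hηε : η ≤ ε / 7 := div_le_div_of_nonneg_right (min_le_left _ _) (by norm_num)
  have hη1 : η ≤ 1 / 7 := div_le_div_of_nonneg_right (min_le_right _ _) (by norm_num)
  obtain ⟨f, hf, hf0, hf1, hfE⟩ := h η hη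
  obtain ⟨F, hF⟩ := exists_finset_lt_setIntegral_biUnion hW hcover hf (a := 1 - η) (by linarith)
  set S := ⋃ i ∈ F, W i
  have hS : MeasurableSet S := F.measurableSet_biUnion fun i _ => hW i
  set c := ∫ x in S, f x ∂μ
  have hc1 : c ≤ 1 := hf1 ▸ setIntegral_le_integral hf (ae_of_all _ hf0)
  have hcpos : 0 < c := by linarith
  refine ⟨F, fun x => c⁻¹ * S.indicator f x, (hf.indicator hS).const_mul _,
    fun x => mul_nonneg (inv_nonneg.2 hcpos.le) (indicator_nonneg (fun x _ => hf0 x) x), ?_,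
    fun x hx => mul_eq_zero_of_right _ (indicator_of_notMem hx f), fun k hk => ?_⟩
  · rw [integral_const_mul, integral_indicator hS, inv_mul_cancel₀ hcpos.ne']
  · simp_rw [← mul_sub, abs_mul, abs_of_pos (inv_pos.2 hcpos)]
    rw [integral_const_mul, inv_mul_lt_iff₀ hcpos]
    have := integral_abs_indicator_comp_sub_le (hτ k) hf hf0 hS
    have := hfE k hk
    nlinarith

section Cocycle

variable {Γ Δ Ω : Type*} [Group Γ] [Group Δ] [MeasurableSpace Ω] {μ : Measure Ω}
  {T : Γ → Ω → Ω} {α : Γ → Ω → Δ}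

/-- The coefficient `γ ↦ ⟪π(γ) ξ, ξ⟫` of the representation of `Γ` induced through the cocycle
`α` from the GNS representation of `u`, at the vector `ξ = g ⊗ (cyclic vector)`. -/
noncomputable def cocycleCoeff (μ : Measure Ω) (T : Γ → Ω → Ω) (α : Γ → Ω → Δ) (u : Δ → ℂ)
    (g : Ω → ℝ) (γ : Γ) : ℂ :=
  ∫ x, (g (T γ⁻¹ x) * g x : ℝ) * u (α γ⁻¹ x)⁻¹ ∂μ

def cocycleFiber (T : Γ → Ω → Ω) (α : Γ → Ω → Δ) (S : Set Ω) (γ : Γ) (δ : Δ) : Set Ω :=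
  {x | α γ⁻¹ x = δ ∧ T γ⁻¹ x ∈ S}

variable [MeasurableSpace Δ]

structure IsCocycle (μ : Measure Ω) (T : Γ → Ω → Ω) (α : Γ → Ω → Δ) : Prop where
  measurePreserving : ∀ γ, MeasurePreserving (T γ) μ μ
  measurable : ∀ γ, Measurable (α γ)
  ae_apply_one : ∀ᵐ x ∂μ, T 1 x = x
  ae_apply_mul : ∀ γ₁ γ₂, ∀ᵐ x ∂μ,
    T (γ₁ * γ₂) x = T γ₁ (T γ₂ x) ∧ α (γ₁ * γ₂) x = α γ₁ (T γ₂ x) * α γ₂ x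

namespace IsCocycle

theorem ae_one (hc : IsCocycle μ T α) : ∀ᵐ x ∂μ, T 1 x = x ∧ α 1 x = 1 := by
  filter_upwards [hc.ae_apply_one, hc.ae_apply_mul 1 1] with x h1 h11
  simp only [mul_one, h1] at h11
  exact ⟨h1, left_eq_mul.1 h11.2⟩

theorem ae_inv_apply (hc : IsCocycle μ T α) (γ : Γ) :
    ∀ᵐ x ∂μ, T γ⁻¹ (T γ x) = x ∧ α γ⁻¹ (T γ x) = (α γ x)⁻¹ := by
  filter_upwards [hc.ae_one, hc.ae_apply_mul γ⁻¹ γ] with x h1 hγ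
  rw [inv_mul_cancel, h1.1, h1.2] at hγ
  exact ⟨hγ.1.symm, eq_inv_of_mul_eq_one_left hγ.2.symm⟩

theorem ae_apply_inv_mul (hc : IsCocycle μ T α) (γ₁ γ₂ : Γ) :
    ∀ᵐ y ∂μ, T (γ₁⁻¹ * γ₂)⁻¹ (T γ₁⁻¹ y) = T γ₂⁻¹ y ∧
      (α (γ₁⁻¹ * γ₂)⁻¹ (T γ₁⁻¹ y))⁻¹ = α γ₁⁻¹ y * (α γ₂⁻¹ y)⁻¹ := by
  have he : (γ₁⁻¹ * γ₂)⁻¹ * γ₁⁻¹ = γ₂⁻¹ := by group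
  filter_upwards [hc.ae_apply_mul (γ₁⁻¹ * γ₂)⁻¹ γ₁⁻¹] with y h
  rw [he] at h
  refine ⟨h.1.symm, ?_⟩
  rw [h.2]
  group

theorem aestronglyMeasurable_comp [Countable Δ] [MeasurableSingletonClass Δ]
    (hc : IsCocycle μ T α) (v : Δ → ℂ) (γ : Γ) :
    AEStronglyMeasurable (fun x => v (α γ x)) μ :=
  ((measurable_of_countable v).comp (hc.measurable γ)).aestronglyMeasurable

end IsCocycle

theorem cocycleCoeff_one (hc : IsCocycle μ T α) {u : Δ → ℂ} (hu1 : u 1 = 1) (g : Ω → ℝ) :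
    cocycleCoeff μ T α u g 1 = (∫ x, g x ^ 2 ∂μ : ℝ) := by
  rw [cocycleCoeff, ← integral_complex_ofReal]
  refine integral_congr_ae ?_
  filter_upwards [hc.ae_one] with x h
  rw [inv_one, h.1, h.2, inv_one, hu1, mul_one, sq]

end Cocycle

section CocycleCoeff

variable {Γ Δ Ω : Type*} [Group Γ] [Group Δ] [MeasurableSpace Ω] [MeasurableSpace Δ]
  [Countable Δ] [MeasurableSingletonClass Δ] {μ : Measure Ω} {T : Γ → Ω → Ω} {α : Γ → Ω → Δ}

theorem cocycleCoeff_inv_mul (hc : IsCocycle μ T α) {g : Ω → ℝ} (hg : AEStronglyMeasurable g μ)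
    (u : Δ → ℂ) (γ₁ γ₂ : Γ) :
    cocycleCoeff μ T α u g (γ₁⁻¹ * γ₂) =
      ∫ y, (g (T γ₂⁻¹ y) * g (T γ₁⁻¹ y) : ℝ) * u (α γ₁⁻¹ y * (α γ₂⁻¹ y)⁻¹) ∂μ := by
  set γ := γ₁⁻¹ * γ₂
  have hmeas : AEStronglyMeasurable
      (fun x => ((g (T γ⁻¹ x) * g x : ℝ) : ℂ) * u (α γ⁻¹ x)⁻¹) μ :=
    (Complex.continuous_ofReal.comp_aestronglyMeasurable
      ((hg.comp_measurePreserving (hc.measurePreserving γ⁻¹)).mul hg)).mul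
      (hc.aestronglyMeasurable_comp (fun d => u d⁻¹) γ⁻¹)
  rw [cocycleCoeff, ← (hc.measurePreserving γ₁⁻¹).integral_comp_of_aestronglyMeasurable hmeas]
  refine integral_congr_ae ?_
  filter_upwards [hc.ae_apply_inv_mul γ₁ γ₂] with y h
  rw [h.1, h.2]

theorem isPosDefFn_cocycleCoeff (hc : IsCocycle μ T α) {u : Δ → ℂ} (hu : IsPosDefFn u)
    (hu1 : u 1 = 1) {g : Ω → ℝ} (hg : MemLp g 2 μ) :
    IsPosDefFn (cocycleCoeff μ T α u g) := by
  intro n γs c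
  let F : Fin n → Fin n → Ω → ℂ := fun i j y => c i * conj (c j) *
    ((g (T (γs i)⁻¹ y) * g (T (γs j)⁻¹ y) : ℝ) * u (α (γs j)⁻¹ y * (α (γs i)⁻¹ y)⁻¹))
  have hF : ∀ i j, Integrable (F i j) μ := fun i j =>
    (((hg.comp_measurePreserving (hc.measurePreserving _)).integrable_mul
      (hg.comp_measurePreserving (hc.measurePreserving _))).ofReal.mul_bdd
      ((measurable_of_countable fun p : Δ × Δ => u (p.1 * p.2⁻¹)).comp
        ((hc.measurable _).prodMk (hc.measurable _))).aestronglyMeasurable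
      (ae_of_all _ fun y => hu.norm_le_one hu1 _)).const_mul _
  have hsum : ∑ i, ∑ j, c i * conj (c j) * cocycleCoeff μ T α u g ((γs j)⁻¹ * γs i) =
      ∫ y, ∑ i, ∑ j, F i j y ∂μ := by
    rw [integral_finsetSum _ fun i _ => integrable_finsetSum _ fun j _ => hF i j]
    refine Finset.sum_congr rfl fun i _ => ?_
    rw [integral_finsetSum _ fun j _ => hF i j]
    refine Finset.sum_congr rfl fun j _ => ?_
    rw [cocycleCoeff_inv_mul hc hg.1, ← integral_const_mul]
  rw [hsum]
  refine integral_nonneg_of_ae (ae_of_all _ fun y => show (0 : ℂ) ≤ _ from ?_)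
  convert hu n (fun i => (α (γs i)⁻¹ y)⁻¹) (fun i => c i * g (T (γs i)⁻¹ y)) using 3 with i _ j _
  simp only [F, inv_inv, map_mul, Complex.conj_ofReal, Complex.ofReal_mul]
  ring

theorem tendsto_cocycleCoeff (hc : IsCocycle μ T α) {u : ℕ → Δ → ℂ} (hu : ∀ n d, ‖u n d‖ ≤ 1)
    (hlim : ∀ d, Tendsto (fun n => u n d) atTop (𝓝 1)) {g : Ω → ℝ} (hg : MemLp g 2 μ) (γ : Γ) :
    Tendsto (fun n => cocycleCoeff μ T α (u n) g γ) atTop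
      (𝓝 (∫ x, g (T γ⁻¹ x) * g x ∂μ : ℝ)) := by
  have hint := integrable_comp_mul hg (hc.measurePreserving γ⁻¹)
  rw [← integral_complex_ofReal]
  refine tendsto_integral_of_dominated_convergence (fun x => |g (T γ⁻¹ x) * g x|)
    (fun n => hint.ofReal.1.mul (hc.aestronglyMeasurable_comp (fun d => u n d⁻¹) γ⁻¹))
    hint.abs (fun n => ae_of_all _ fun x => ?_) (ae_of_all _ fun x => ?_)
  · rw [norm_mul, Complex.norm_real, Real.norm_eq_abs]
    exact mul_le_of_le_one_right (abs_nonneg _) (hu n _)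
  · simpa using (hlim (α γ⁻¹ x)⁻¹).const_mul ((g (T γ⁻¹ x) * g x : ℝ) : ℂ)

end CocycleCoeff

section Fiber

variable {Γ Δ Ω : Type*} [Group Γ] [Group Δ] [MeasurableSpace Ω] [MeasurableSpace Δ]
  [MeasurableSingletonClass Δ] {μ : Measure Ω} {T : Γ → Ω → Ω} {α : Γ → Ω → Δ} {S : Set Ω}
  {g : Ω → ℝ}

theorem measurableSet_cocycleFiber (hc : IsCocycle μ T α) (hS : MeasurableSet S) (γ : Γ)
    (δ : Δ) : MeasurableSet (cocycleFiber T α S γ δ) :=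
  (hc.measurable γ⁻¹ (measurableSet_singleton δ)).inter ((hc.measurePreserving γ⁻¹).measurable hS)

theorem setIntegral_fiber_le (hc : IsCocycle μ T α) (hS : MeasurableSet S) (hg : MemLp g 2 μ)
    (hgS : ∀ x ∉ S, g x = 0) (γ : Γ) (δ : Δ) :
    ∫ x in {x | α γ⁻¹ x = δ}, g (T γ⁻¹ x) * g x ∂μ ≤
      (∫ x, (cocycleFiber T α S γ⁻¹ δ⁻¹).indicator (g · ^ 2) x ∂μ +
        ∫ x, (cocycleFiber T α S γ δ).indicator (g · ^ 2) x ∂μ) / 2 := by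
  -- As `g` vanishes off `S`, `g a * g b ≤ (1_S(b) g(a)² + 1_S(a) g(b)²) / 2`; the substitution
  -- `x = T γ y` moves the first term onto `cocycleFiber T α S γ⁻¹ δ⁻¹`.
  have hτ := hc.measurePreserving γ⁻¹
  have hA : MeasurableSet {x | α γ⁻¹ x = δ} := hc.measurable γ⁻¹ (measurableSet_singleton δ)
  set B := {x | α γ⁻¹ x = δ ∧ x ∈ S}
  have hB : MeasurableSet B := hA.inter hS
  have hg2 : Integrable (g · ^ 2) μ := hg.integrable_sq
  have hg2τ : Integrable (fun x => g (T γ⁻¹ x) ^ 2) μ :=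
    (hg.comp_measurePreserving hτ).integrable_sq
  have hchange : ∫ x, B.indicator (fun x => g (T γ⁻¹ x) ^ 2) x ∂μ =
      ∫ x, (cocycleFiber T α S γ⁻¹ δ⁻¹).indicator (g · ^ 2) x ∂μ := by
    rw [← (hc.measurePreserving γ).integral_comp_of_aestronglyMeasurable (hg2τ.indicator hB).1]
    refine integral_congr_ae ?_
    filter_upwards [hc.ae_inv_apply γ] with y hy
    classical
    simp only [indicator_apply, B, cocycleFiber, mem_ofPred_eq, inv_inv, hy.1, hy.2,
      inv_eq_iff_eq_inv]
  rw [← integral_indicator hA, ← hchange, ← integral_add (hg2τ.indicator hB)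
    (hg2.indicator (measurableSet_cocycleFiber hc hS γ δ)), ← integral_div]
  refine integral_mono ((integrable_comp_mul hg hτ).indicator hA)
    (((hg2τ.indicator hB).add (hg2.indicator (measurableSet_cocycleFiber hc hS γ δ))).div_const 2)
    fun x => ?_
  classical
  by_cases hx : α γ⁻¹ x = δ
  · by_cases h1 : x ∈ S
    · by_cases h2 : T γ⁻¹ x ∈ S
      · rw [indicator_of_mem (show x ∈ {x | α γ⁻¹ x = δ} from hx),
          indicator_of_mem (show x ∈ B from ⟨hx, h1⟩),
          indicator_of_mem (show x ∈ cocycleFiber T α S γ δ from ⟨hx, h2⟩)]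
        nlinarith [sq_nonneg (g (T γ⁻¹ x) - g x)]
      · simp [B, cocycleFiber, hx, h1, h2, hgS _ h2]
    · simp [indicator_apply, B, cocycleFiber, hx, h1, hgS _ h1]
  · simp [B, cocycleFiber, hx]

open Classical in
theorem summable_setIntegral_fiber (hc : IsCocycle μ T α) (hS : MeasurableSet S) {N : ℕ}
    (hN : ∀ x δ (G : Finset Γ), #{γ ∈ G | x ∈ cocycleFiber T α S γ δ} ≤ N)
    (hg : MemLp g 2 μ) (hg0 : 0 ≤ g) (hgS : ∀ x ∉ S, g x = 0) (δ : Δ) :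
    Summable fun γ => ∫ x in {x | α γ⁻¹ x = δ}, g (T γ⁻¹ x) * g x ∂μ := by
  set P : Γ → Δ → ℝ := fun γ δ => ∫ x, (cocycleFiber T α S γ δ).indicator (g · ^ 2) x ∂μ
  have hP : ∀ δ (G : Finset Γ), ∑ γ ∈ G, P γ δ ≤ N * ∫ x, g x ^ 2 ∂μ := fun δ G =>
    sum_integral_indicator_le (measurableSet_cocycleFiber hc hS · δ) hg.integrable_sq
      (fun x => sq_nonneg _) (hN · δ G)
  refine summable_of_sum_le (c := N * ∫ x, g x ^ 2 ∂μ) (fun γ => setIntegral_nonneg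
    (hc.measurable γ⁻¹ (measurableSet_singleton δ)) fun x _ => mul_nonneg (hg0 _) (hg0 _))
    fun G => ?_
  calc ∑ γ ∈ G, ∫ x in {x | α γ⁻¹ x = δ}, g (T γ⁻¹ x) * g x ∂μ
      ≤ ∑ γ ∈ G, (P γ⁻¹ δ⁻¹ + P γ δ) / 2 :=
        Finset.sum_le_sum fun γ _ => setIntegral_fiber_le hc hS hg hgS γ δ
    _ = (∑ γ ∈ G.image (·⁻¹), P γ δ⁻¹ + ∑ γ ∈ G, P γ δ) / 2 := by
        rw [Finset.sum_image inv_injective.injOn, ← Finset.sum_add_distrib, Finset.sum_div]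
    _ ≤ (N * ∫ x, g x ^ 2 ∂μ + N * ∫ x, g x ^ 2 ∂μ) / 2 := by gcongr <;> exact hP _ _
    _ = N * ∫ x, g x ^ 2 ∂μ := by ring

theorem norm_cocycleCoeff_le (hc : IsCocycle μ T α) (hg : MemLp g 2 μ) (hg0 : 0 ≤ g)
    {u : Δ → ℂ} (hu : ∀ d, ‖u d‖ ≤ 1) {t : ℝ} (ht : 0 ≤ t) {K : Finset Δ}
    (hK : ∀ δ ∉ K, ‖u δ⁻¹‖ < t) (γ : Γ) :
    ‖cocycleCoeff μ T α u g γ‖ ≤ t * ∫ x, g (T γ⁻¹ x) * g x ∂μ +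
      ∑ δ ∈ K, ∫ x in {x | α γ⁻¹ x = δ}, g (T γ⁻¹ x) * g x ∂μ := by
  have hint := integrable_comp_mul hg (hc.measurePreserving γ⁻¹)
  have hA : ∀ δ, MeasurableSet {x | α γ⁻¹ x = δ} := fun δ =>
    hc.measurable γ⁻¹ (measurableSet_singleton δ)
  have hsum : Integrable (fun x => ∑ δ ∈ K,
      {x | α γ⁻¹ x = δ}.indicator (fun x => g (T γ⁻¹ x) * g x) x) μ :=
    integrable_finsetSum _ fun δ _ => hint.indicator (hA δ)
  simp_rw [← integral_indicator (hA _)]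
  rw [← integral_const_mul, ← integral_finsetSum _ fun δ _ => hint.indicator (hA δ),
    ← integral_add (hint.const_mul t) hsum]
  refine (norm_integral_le_integral_norm _).trans (integral_mono_of_nonneg
    (ae_of_all _ fun x => norm_nonneg _) ((hint.const_mul t).add hsum) (ae_of_all _ fun x => ?_))
  have hgg : 0 ≤ g (T γ⁻¹ x) * g x := mul_nonneg (hg0 _) (hg0 _)
  have hsum0 : 0 ≤ ∑ δ ∈ K, {x | α γ⁻¹ x = δ}.indicator (fun x => g (T γ⁻¹ x) * g x) x :=
    Finset.sum_nonneg fun δ _ => indicator_nonneg (fun _ _ => mul_nonneg (hg0 _) (hg0 _)) x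
  simp only [norm_mul, Complex.norm_real, Real.norm_of_nonneg hgg]
  by_cases hx : α γ⁻¹ x ∈ K
  · have hle := Finset.single_le_sum (f := fun δ =>
      {x | α γ⁻¹ x = δ}.indicator (fun x => g (T γ⁻¹ x) * g x) x)
      (fun δ _ => indicator_nonneg (fun _ _ => mul_nonneg (hg0 _) (hg0 _)) x) hx
    rw [indicator_of_mem (show x ∈ {y | α γ⁻¹ y = α γ⁻¹ x} from rfl)] at hle
    nlinarith [hu (α γ⁻¹ x)⁻¹, mul_nonneg ht hgg]
  · nlinarith [hK _ hx]

open Classical in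
theorem tendsto_cocycleCoeff_cofinite (hc : IsCocycle μ T α) (hS : MeasurableSet S) {N : ℕ}
    (hN : ∀ x δ (G : Finset Γ), #{γ ∈ G | x ∈ cocycleFiber T α S γ δ} ≤ N)
    (hg : MemLp g 2 μ) (hg0 : 0 ≤ g) (hgS : ∀ x ∉ S, g x = 0) {u : Δ → ℂ}
    (hu : ∀ d, ‖u d‖ ≤ 1) (hu0 : Tendsto u cofinite (𝓝 0)) :
    Tendsto (cocycleCoeff μ T α u g) cofinite (𝓝 0) := by
  rw [tendsto_cofinite_zero_iff_finite_setOf_le_norm] at hu0 ⊢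
  intro ε hε
  set c := ∫ x, g x ^ 2 ∂μ
  have hc0 : 0 ≤ c := integral_nonneg fun x => sq_nonneg _
  set t := ε / (2 * (c + 1))
  have ht : 0 < t := by positivity
  have htc : t * c ≤ ε / 2 := by
    rw [div_mul_eq_mul_div, div_le_div_iff₀ (by positivity) two_pos]
    nlinarith
  have hK := (hu0 t ht).preimage inv_injective.injOn
  have hh := (summable_sum fun δ _ => summable_setIntegral_fiber hc hS hN hg hg0 hgS δ :
    Summable fun γ => ∑ δ ∈ hK.toFinset, ∫ x in {x | α γ⁻¹ x = δ}, g (T γ⁻¹ x) * g x ∂μ)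
  refine ((tendsto_cofinite_zero_iff_finite_setOf_le_norm.1 hh.tendsto_cofinite_zero) (ε / 2)
    (half_pos hε)).subset fun γ (hγ : ε ≤ _) => ?_
  have hbound := norm_cocycleCoeff_le hc hg hg0 hu ht.le (K := hK.toFinset)
    (fun δ hδ => by simpa using hδ) γ
  have hI := integral_comp_mul_le_integral_sq (hc.measurePreserving γ⁻¹) hg
  show ε / 2 ≤ ‖_‖
  rw [Real.norm_eq_abs]
  nlinarith [le_abs_self (∑ δ ∈ hK.toFinset, ∫ x in {x | α γ⁻¹ x = δ}, g (T γ⁻¹ x) * g x ∂μ)]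

end Fiber

open Classical in
theorem exists_cocycleCoeff_near_one {Γ Δ Ω : Type*} [Group Γ] [Group Δ] [MeasurableSpace Ω]
    [MeasurableSpace Δ] [Countable Δ] [MeasurableSingletonClass Δ] {μ : Measure Ω}
    {T : Γ → Ω → Ω} {α : Γ → Ω → Δ} (hc : IsCocycle μ T α) {S : Set Ω} (hS : MeasurableSet S)
    {N : ℕ} (hN : ∀ x δ (G : Finset Γ), #{γ ∈ G | x ∈ cocycleFiber T α S γ δ} ≤ N)
    {φ : Ω → ℝ} (hφ : Integrable φ μ) (hφ0 : 0 ≤ φ) (hφ1 : ∫ x, φ x ∂μ = 1)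
    (hφS : ∀ x ∉ S, φ x = 0) {u : ℕ → Δ → ℂ} (hu : ∀ n, IsPosDefFn (u n)) (hu1 : ∀ n, u n 1 = 1)
    (hu0 : ∀ n, Tendsto (u n) cofinite (𝓝 0)) (hlim : ∀ d, Tendsto (fun n => u n d) atTop (𝓝 1))
    {E : Finset Γ} {ε : ℝ} (hE : ∀ γ ∈ E, ∫ x, |φ (T γ⁻¹ x) - φ x| ∂μ < ε) :
    ∃ w : Γ → ℂ, (IsPosDefFn w ∧ w 1 = 1 ∧ Tendsto w cofinite (𝓝 0)) ∧
      ∀ γ ∈ E, dist (w γ) 1 < ε := by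
  set g := fun x => √(φ x)
  have hg2 : ∀ x, g x ^ 2 = φ x := fun x => Real.sq_sqrt (hφ0 x)
  have hg : MemLp g 2 μ :=
    (memLp_two_iff_integrable_sq hφ.1.aemeasurable.sqrt.aestronglyMeasurable).2
      (hφ.congr (ae_of_all _ fun x => (hg2 x).symm))
  have hg0 : 0 ≤ g := fun x => Real.sqrt_nonneg _
  have hgS : ∀ x ∉ S, g x = 0 := fun x hx => by simp [g, hφS x hx]
  set I : Γ → ℝ := fun γ => ∫ x, g (T γ⁻¹ x) * g x ∂μ
  have hI : ∀ γ ∈ E, |I γ - 1| < ε := fun γ hγ => by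
    have hup := integral_comp_mul_le_integral_sq (hc.measurePreserving γ⁻¹) hg
    have hlow := integral_sq_sub_le_integral_comp_mul (hc.measurePreserving γ⁻¹) hg hg0
    simp only [hg2, hφ1] at hup hlow
    rw [abs_sub_lt_iff]
    constructor <;> linarith [hE γ hγ]
  have hev : ∀ᶠ n in atTop, ∀ γ ∈ E,
      dist (cocycleCoeff μ T α (u n) g γ) (I γ) < ε - |I γ - 1| :=
    (Finset.eventually_all E).2 fun γ hγ =>
      (tendsto_cocycleCoeff hc (fun n => (hu n).norm_le_one (hu1 n)) hlim hg γ).eventually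
        (Metric.ball_mem_nhds _ (sub_pos.2 (hI γ hγ)))
  obtain ⟨n, hn⟩ := hev.exists
  refine ⟨cocycleCoeff μ T α (u n) g, ⟨isPosDefFn_cocycleCoeff hc (hu n) (hu1 n) hg, ?_,
    tendsto_cocycleCoeff_cofinite hc hS hN hg hg0 hgS ((hu n).norm_le_one (hu1 n)) (hu0 n)⟩,
    fun γ hγ => ?_⟩
  · rw [cocycleCoeff_one hc (hu1 n)]
    simp [hg2, hφ1]
  · have hdist : dist (I γ : ℂ) 1 = |I γ - 1| := by
      rw [← Complex.ofReal_one, Complex.dist_eq, ← Complex.ofReal_sub, Complex.norm_real,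
        Real.norm_eq_abs]
    linarith [dist_triangle (cocycleCoeff μ T α (u n) g γ) (I γ) 1, hn γ hγ]

open Classical in
theorem card_filter_inv_smul_mem_biUnion_le {Γ Ω : Type*} [Group Γ] [MulAction Γ Ω] {Y : Set Ω}
    (hY : ∀ s : Ω, ∃! γ : Γ, γ⁻¹ • s ∈ Y) (F G : Finset Γ) (s : Ω) :
    #{γ ∈ G | γ⁻¹ • s ∈ ⋃ γ' ∈ F, γ' • Y} ≤ #F := by
  obtain ⟨β, hβ, -⟩ := hY s
  refine (Finset.card_le_card fun γ hγ => ?_).trans (Finset.card_image_le (s := F)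
    (f := fun γ' => β * γ'⁻¹))
  obtain ⟨γ', hγ'F, hγ'⟩ := mem_iUnion₂.1 (Finset.mem_filter.1 hγ).2
  rw [mem_smul_set_iff_inv_smul_mem, smul_smul, ← mul_inv_rev] at hγ'
  have hβ' : γ * γ' = β := (hY s).unique hγ' hβ
  exact Finset.mem_image.2 ⟨γ', hγ'F, by rw [← hβ']; group⟩

section Coupling

variable {Γ Δ Ω : Type*} [Group Γ] [Group Δ] [MulAction Γ Ω] {r : Ω → Δ → Ω}
  {α : Γ → Ω → Δ}

def inducedAction (r : Ω → Δ → Ω) (α : Γ → Ω → Δ) (γ : Γ) (x : Ω) : Ω :=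
  r (γ • x) (α γ x)⁻¹

theorem inducedAction_mul_of_mem (hrmul : ∀ s δ₁ δ₂, r s (δ₁ * δ₂) = r (r s δ₁) δ₂)
    (hcomm : ∀ (γ : Γ) (s : Ω) (δ : Δ), γ • r s δ = r (γ • s) δ) {X : Set Ω}
    (hXfund : ∀ s : Ω, ∃! δ : Δ, r s δ ∈ X) (hα : ∀ γ : Γ, ∀ x ∈ X, r (γ • x) (α γ x)⁻¹ ∈ X)
    (γ₁ γ₂ : Γ) {x : Ω} (hx : x ∈ X) :
    inducedAction r α (γ₁ * γ₂) x = inducedAction r α γ₁ (inducedAction r α γ₂ x) ∧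
      α (γ₁ * γ₂) x = α γ₁ (inducedAction r α γ₂ x) * α γ₂ x := by
  set δ := α γ₁ (inducedAction r α γ₂ x) * α γ₂ x
  have hcomp : r ((γ₁ * γ₂) • x) δ⁻¹ = inducedAction r α γ₁ (inducedAction r α γ₂ x) := by
    rw [mul_inv_rev, hrmul, mul_smul, ← hcomm]
    rfl
  have hδ : α (γ₁ * γ₂) x = δ :=
    inv_injective ((hXfund _).unique (hα _ x hx) (hcomp ▸ hα γ₁ _ (hα γ₂ x hx)))
  exact ⟨by rw [inducedAction, hδ, hcomp], hδ⟩

theorem isCocycle_inducedAction [MeasurableSpace Ω] [MeasurableSpace Δ] {m : Measure Ω}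
    (hr1 : ∀ s, r s 1 = s) (hrmul : ∀ s δ₁ δ₂, r s (δ₁ * δ₂) = r (r s δ₁) δ₂)
    (hcomm : ∀ (γ : Γ) (s : Ω) (δ : Δ), γ • r s δ = r (γ • s) δ) {X : Set Ω}
    (hXmeas : MeasurableSet X) (hXfund : ∀ s : Ω, ∃! δ : Δ, r s δ ∈ X)
    (hαmeas : ∀ γ : Γ, Measurable (α γ)) (hα : ∀ γ : Γ, ∀ x ∈ X, r (γ • x) (α γ x)⁻¹ ∈ X)
    (hind : ∀ γ : Γ, MeasurePreserving (inducedAction r α γ) (m.restrict X) (m.restrict X)) :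
    IsCocycle (m.restrict X) (inducedAction r α) α where
  measurePreserving := hind
  measurable := hαmeas
  ae_apply_one := by
    filter_upwards [ae_restrict_mem hXmeas] with x hx
    have h1 : α 1 x = 1 :=
      inv_injective ((hXfund _).unique (hα 1 x hx) (by simpa [hr1] using hx))
    simp [inducedAction, h1, hr1]
  ae_apply_mul γ₁ γ₂ := by
    filter_upwards [ae_restrict_mem hXmeas] with x hx
    exact inducedAction_mul_of_mem hrmul hcomm hXfund hα γ₁ γ₂ hx

open Classical in
theorem card_filter_mem_cocycleFiber_inducedAction_le
    (hcomm : ∀ (γ : Γ) (s : Ω) (δ : Δ), γ • r s δ = r (γ • s) δ) {Y : Set Ω}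
    (hY : ∀ s : Ω, ∃! γ : Γ, γ⁻¹ • s ∈ Y) (F : Finset Γ) (x : Ω) (δ : Δ) (G : Finset Γ) :
    #{γ ∈ G | x ∈ cocycleFiber (inducedAction r α) α (⋃ γ' ∈ F, γ' • Y) γ δ} ≤ #F := by
  refine (Finset.card_le_card (Finset.monotone_filter_right G fun γ _ hγ => ?_)).trans
    (card_filter_inv_smul_mem_biUnion_le hY F G (r x δ⁻¹))
  obtain ⟨hαx, hT⟩ := hγ
  rwa [inducedAction, hαx, ← hcomm] at hT

end Coupling

theorem haagerup_of_measure_equivalence_general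
    {Γ Δ Ω : Type*}
    [Group Γ] [Countable Γ] [Group Δ] [Countable Δ]
    [MeasurableSpace Δ] [MeasurableSingletonClass Δ]
    [MeasurableSpace Ω]
    (m : Measure Ω)
    -- the left action of Γ : measurable and measure preserving
    [MulAction Γ Ω]
    (hΓmp : ∀ γ : Γ, MeasurePreserving (fun s : Ω => γ • s) m m)
    -- the right action of Δ : measurable and measure preserving
    (r : Ω → Δ → Ω)
    (hr1 : ∀ s, r s 1 = s)
    (hrmul : ∀ s δ₁ δ₂, r s (δ₁ * δ₂) = r (r s δ₁) δ₂)
    -- the two actions commute and are free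
    (hcomm : ∀ (γ : Γ) (s : Ω) (δ : Δ), γ • r s δ = r (γ • s) δ)
    -- `X` is a strict fundamental domain for the Δ-action
    (X : Set Ω) (hXmeas : MeasurableSet X)
    (hXfund : ∀ s : Ω, ∃! δ : Δ, r s δ ∈ X)
    -- `Y` is a strict fundamental domain for the Γ-action
    (Y : Set Ω) (hYmeas : MeasurableSet Y)
    (hYfund : ∀ s : Ω, ∃! γ : Γ, γ⁻¹ • s ∈ Y)
    -- the cocycle `α` and the induced action `γ∗x = γ·x·α(γ,x)⁻¹` on `X`
    (α : Γ → Ω → Δ)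
    (hαmeas : ∀ γ : Γ, Measurable (α γ))
    (hα : ∀ γ : Γ, ∀ x ∈ X, r (γ • x) (α γ x)⁻¹ ∈ X)
    -- the induced action preserves `μ = m|_X`
    (hind : ∀ γ : Γ, MeasurePreserving (fun x => r (γ • x) (α γ x)⁻¹)
      (m.restrict X) (m.restrict X))
    -- the pair `(Γ, X)` is amenable
    (f : ℕ → Ω → ℝ)
    (hfnonneg : ∀ n x, 0 ≤ f n x)
    (hfint : ∀ n, ∫ x in X, f n x ∂m = 1)
    (hfinv : ∀ γ : Γ, Tendsto
      (fun n => ∫ x in X, |f n (r (γ⁻¹ • x) (α γ⁻¹ x)⁻¹) - f n x| ∂m) atTop (nhds 0))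
    -- `Δ` has the Haagerup property
    (u : ℕ → Δ → ℂ)
    (hupd : ∀ n, IsPosDefFn (u n))
    (hu1 : ∀ n, u n 1 = 1)
    (huC0 : ∀ n, ∀ ε : ℝ, 0 < ε → {d : Δ | ε ≤ ‖u n d‖}.Finite)
    (hulim : ∀ d : Δ, Tendsto (fun n => u n d) atTop (nhds 1)) :
    -- then `Γ` has the Haagerup property
    ∃ v : ℕ → Γ → ℂ, (∀ n, IsPosDefFn (v n)) ∧ (∀ n, v n 1 = 1) ∧
      (∀ n, ∀ ε : ℝ, 0 < ε → {γ : Γ | ε ≤ ‖v n γ‖}.Finite) ∧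
      ∀ γ : Γ, Tendsto (fun n => v n γ) atTop (nhds 1) := by
  have hc := isCocycle_inducedAction hr1 hrmul hcomm hXmeas hXfund hαmeas hα hind
  have hW : ∀ γ : Γ, MeasurableSet (γ • Y) := fun γ => by
    simpa [preimage_smul] using (hΓmp γ⁻¹).measurable hYmeas
  have hcover : ⋃ γ : Γ, γ • Y = univ := eq_univ_of_forall fun s =>
    mem_iUnion.2 (by simpa [mem_smul_set_iff_inv_smul_mem] using (hYfund s).exists)
  have hamenable : ∀ (E : Finset Γ) (η : ℝ), 0 < η → ∃ φ : Ω → ℝ, Integrable φ (m.restrict X) ∧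
      0 ≤ φ ∧ ∫ x in X, φ x ∂m = 1 ∧
      ∀ γ ∈ E, ∫ x in X, |φ (inducedAction r α γ⁻¹ x) - φ x| ∂m < η := fun E η hη => by
    obtain ⟨n, hn⟩ := ((Finset.eventually_all E).2 fun γ _ =>
      (hfinv γ).eventually (gt_mem_nhds hη)).exists
    exact ⟨f n, .of_integral_ne_zero (by rw [hfint n]; exact one_ne_zero), hfnonneg n, hfint n, hn⟩
  obtain ⟨v, hv, hlim⟩ := exists_seq_forall_tendsto_of_forall_finset (φ := fun _ : Γ => (1 : ℂ))
    (P := fun w => IsPosDefFn w ∧ w 1 = 1 ∧ Tendsto w cofinite (𝓝 0)) fun E ε hε => by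
      obtain ⟨F, φ, hφ, hφ0, hφ1, hφS, hφE⟩ := exists_density_supported_biUnion
        (fun γ => hc.measurePreserving γ⁻¹) hW hcover (hamenable E) hε
      exact exists_cocycleCoeff_near_one hc (F.measurableSet_biUnion fun γ _ => hW γ)
        (card_filter_mem_cocycleFiber_inducedAction_le hcomm hYfund F) hφ hφ0 hφ1 hφS hupd hu1
        (fun n => tendsto_cofinite_zero_iff_finite_setOf_le_norm.2 (huC0 n)) hulim hφE
  exact ⟨v, fun n => (hv n).1, fun n => (hv n).2.1,
    fun n => tendsto_cofinite_zero_iff_finite_setOf_le_norm.1 (hv n).2.2, hlim⟩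

/-- Theorem 1.9(1): if `Γ` and `Δ` are (amenably) measure equivalent — via commuting
measure-preserving free actions on `(Ω, m)` with fundamental domains `X` (for `Δ`) and `Y`
(for `Γ`), the induced `Γ`-action on `X` preserving `μ = m|_X`, and with the pair `(Γ, X)`
amenable — and `Δ` has the Haagerup property, then `Γ` has the Haagerup property. -/
theorem haagerup_of_measure_equivalence
    {Γ Δ Ω : Type*}
    [Group Γ] [Countable Γ] [Group Δ] [Countable Δ]
    [MeasurableSpace Δ] [MeasurableSingletonClass Δ]
    [MeasurableSpace Ω] [StandardBorelSpace Ω]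
    (m : Measure Ω) [SigmaFinite m]
    -- the left action of Γ : measurable and measure preserving
    [MulAction Γ Ω]
    (hΓmp : ∀ γ : Γ, MeasurePreserving (fun s : Ω => γ • s) m m)
    -- the right action of Δ : measurable and measure preserving
    (r : Ω → Δ → Ω)
    (hr1 : ∀ s, r s 1 = s)
    (hrmul : ∀ s δ₁ δ₂, r s (δ₁ * δ₂) = r (r s δ₁) δ₂)
    (hΔmp : ∀ δ : Δ, MeasurePreserving (fun s => r s δ) m m)
    -- the two actions commute and are free
    (hcomm : ∀ (γ : Γ) (s : Ω) (δ : Δ), γ • r s δ = r (γ • s) δ)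
    (hΓfree : ∀ (γ : Γ) (s : Ω), γ • s = s → γ = 1)
    (hΔfree : ∀ (δ : Δ) (s : Ω), r s δ = s → δ = 1)
    -- `X` is a strict fundamental domain for the Δ-action
    (X : Set Ω) (hXmeas : MeasurableSet X)
    (hXfund : ∀ s : Ω, ∃! δ : Δ, r s δ ∈ X)
    -- `Y` is a strict fundamental domain for the Γ-action
    (Y : Set Ω) (hYmeas : MeasurableSet Y)
    (hYfund : ∀ s : Ω, ∃! γ : Γ, γ⁻¹ • s ∈ Y)
    -- the cocycle `α` and the induced action `γ∗x = γ·x·α(γ,x)⁻¹` on `X`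
    (α : Γ → Ω → Δ)
    (hαmeas : ∀ γ : Γ, Measurable (α γ))
    (hα : ∀ γ : Γ, ∀ x ∈ X, r (γ • x) (α γ x)⁻¹ ∈ X)
    -- the induced action preserves `μ = m|_X`
    (hind : ∀ γ : Γ, MeasurePreserving (fun x => r (γ • x) (α γ x)⁻¹)
      (m.restrict X) (m.restrict X))
    -- the pair `(Γ, X)` is amenable
    (f : ℕ → Ω → ℝ)
    (hfmeas : ∀ n, Measurable (f n)) (hfnonneg : ∀ n x, 0 ≤ f n x)
    (hfint : ∀ n, ∫ x in X, f n x ∂m = 1)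
    (hfinv : ∀ γ : Γ, Tendsto
      (fun n => ∫ x in X, |f n (r (γ⁻¹ • x) (α γ⁻¹ x)⁻¹) - f n x| ∂m) atTop (nhds 0))
    -- `Δ` has the Haagerup property
    (u : ℕ → Δ → ℂ)
    (hupd : ∀ n, IsPosDefFn (u n))
    (hu1 : ∀ n, u n 1 = 1)
    (huC0 : ∀ n, ∀ ε : ℝ, 0 < ε → {d : Δ | ε ≤ ‖u n d‖}.Finite)
    (hulim : ∀ d : Δ, Tendsto (fun n => u n d) atTop (nhds 1)) :
    -- then `Γ` has the Haagerup property
    ∃ v : ℕ → Γ → ℂ, (∀ n, IsPosDefFn (v n)) ∧ (∀ n, v n 1 = 1) ∧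
      (∀ n, ∀ ε : ℝ, 0 < ε → {γ : Γ | ε ≤ ‖v n γ‖}.Finite) ∧
      ∀ γ : Γ, Tendsto (fun n => v n γ) atTop (nhds 1) :=
  haagerup_of_measure_equivalence_general m hΓmp r hr1 hrmul hcomm X hXmeas hXfund Y hYmeas hYfund α
    hαmeas hα hind f hfnonneg hfint hfinv u hupd hu1 huC0 hulim
end

section
/- Let ℋ be a complex Hilbert space and let ξ, η : H → ℋ be bounded continuous maps such that u(t⁻¹s) = ⟪ξ(s), η(t)⟫ for all s, t ∈ H, where u : H → ℂ. For g ∈ G define ξ̂_g, η̂_g : X → ℋ by ξ̂_g(x) = √(χ(g⁻¹, x)) • ξ(α(g⁻¹, x)⁻¹) and η̂_g(x) = √(χ(g⁻¹, x)) • η(α(g⁻¹, x)⁻¹). Then: (1) for every g ∈ G, ∫_X ‖ξ̂_g(x)‖² dμ(x) ≤ (sup_{h ∈ H} ‖ξ(h)‖)² and ∫_X ‖η̂_g(x)‖² dμ(x) ≤ (sup_{h ∈ H} ‖η(h)‖)²; (2) for all g, h ∈ G, û(h⁻¹g) = ∫_X ⟪ξ̂_g(x), η̂_h(x)⟫ dμ(x).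 -/
open MeasureTheory Set
open scoped ENNReal

/-!
Substituting `x ↦ g⁻¹ • x` turns `∫ u(α(k, x)) √χ(k, x) dμ` into
`∫ χ(g⁻¹, x) u(α(k, g⁻¹x)) √χ(k, g⁻¹x) dμ`. For `k = h⁻¹g` the cocycle identities at `(k, g⁻¹)` give
`α(k, g⁻¹x) = α(h⁻¹, x) α(g⁻¹, x)⁻¹` and `χ(h⁻¹, x) = χ(k, g⁻¹x) χ(g⁻¹, x)`, so the integrand is
`√χ(g⁻¹, x) √χ(h⁻¹, x) ⟪ξ(α(g⁻¹, x)⁻¹), η(α(h⁻¹, x)⁻¹)⟫`. The norm bounds hold because `χ(g, ·)`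
is a probability density.
-/

section Density

variable {X : Type*} [MeasurableSpace X] {μ : Measure X} {T : X → X} {ρ : X → ℝ}

theorem map_withDensity_ofReal_eq_of_lintegral_comp_mul (hT : Measurable T) (hρ : Measurable ρ)
    (hTρ : ∀ f : X → ℝ≥0∞, Measurable f →
      ∫⁻ x, f (T x) * ENNReal.ofReal (ρ x) ∂μ = ∫⁻ x, f x ∂μ) :
    (μ.withDensity fun x => ENNReal.ofReal (ρ x)).map T = μ := by
  refine Measure.ext_of_lintegral _ fun f hf => ?_
  rw [lintegral_map hf hT,
    lintegral_withDensity_eq_lintegral_mul _ hρ.ennreal_ofReal (g := fun x => f (T x)) (hf.comp hT),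
    ← hTρ f hf]
  simp only [Pi.mul_apply, mul_comm]

theorem integral_eq_integral_smul_comp_of_lintegral_comp_mul {E : Type*} [NormedAddCommGroup E]
    [NormedSpace ℝ E] (hT : Measurable T) (hρ : Measurable ρ) (hρ0 : ∀ x, 0 ≤ ρ x)
    (hTρ : ∀ f : X → ℝ≥0∞, Measurable f →
      ∫⁻ x, f (T x) * ENNReal.ofReal (ρ x) ∂μ = ∫⁻ x, f x ∂μ)
    {f : X → E} (hf : AEStronglyMeasurable f μ) :
    ∫ x, f x ∂μ = ∫ x, ρ x • f (T x) ∂μ := by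
  have hmap := map_withDensity_ofReal_eq_of_lintegral_comp_mul hT hρ hTρ
  conv_lhs => rw [← hmap]
  rw [integral_map hT.aemeasurable (by rwa [hmap]),
    integral_withDensity_eq_integral_toReal_smul hρ.ennreal_ofReal
      (ae_of_all _ fun _ => ENNReal.ofReal_lt_top)]
  simp only [ENNReal.toReal_ofReal (hρ0 _)]

theorem lintegral_ofReal_norm_sqrt_smul_sq_le {E : Type*} [NormedAddCommGroup E]
    [NormedSpace ℝ E] {v : X → E} {S : ℝ} (hρ0 : ∀ x, 0 ≤ ρ x)
    (hρ : ∫⁻ x, ENNReal.ofReal (ρ x) ∂μ ≤ 1) (hv : ∀ x, ‖v x‖ ≤ S) :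
    ∫⁻ x, ENNReal.ofReal (‖√(ρ x) • v x‖ ^ 2) ∂μ ≤ ENNReal.ofReal (S ^ 2) :=
  calc ∫⁻ x, ENNReal.ofReal (‖√(ρ x) • v x‖ ^ 2) ∂μ
      ≤ ∫⁻ x, ENNReal.ofReal (ρ x) * ENNReal.ofReal (S ^ 2) ∂μ := lintegral_mono fun x => by
        rw [← ENNReal.ofReal_mul (hρ0 x), norm_smul, mul_pow, Real.norm_eq_abs, sq_abs,
          Real.sq_sqrt (hρ0 x)]
        gcongr
        exacts [hρ0 x, hv x]
    _ = (∫⁻ x, ENNReal.ofReal (ρ x) ∂μ) * ENNReal.ofReal (S ^ 2) :=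
        lintegral_mul_const' _ _ ENNReal.ofReal_ne_top
    _ ≤ ENNReal.ofReal (S ^ 2) := by
        simpa using mul_le_mul_left hρ (ENNReal.ofReal (S ^ 2))

end Density

theorem real_smul_mul_sqrt_eq_inner_sqrt_smul {H E : Type*} [Group H] [NormedAddCommGroup E]
    [InnerProductSpace ℂ E] {ξ η : H → E} {u : H → ℂ}
    (hu : ∀ s t : H, u (t⁻¹ * s) = inner ℂ (ξ s) (η t)) {a b c : ℝ} (ha : 0 ≤ a) (hc : 0 ≤ c)
    (hb : b = c * a) {p q r : H} (hr : q = r * p) :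
    a • (u r * (√c : ℂ)) = inner ℂ (√a • ξ p⁻¹) (√b • η q⁻¹) := by
  have hur : u r = inner ℂ (ξ p⁻¹) (η q⁻¹) := by
    rw [← hu, inv_inv, hr, mul_inv_cancel_right]
  rw [hur, hb, Real.sqrt_mul hc, ← Complex.coe_smul √a, ← Complex.coe_smul (√c * √a),
    inner_smul_left, inner_smul_right, Complex.conj_ofReal, Complex.real_smul]
  conv_lhs => rw [← Real.mul_self_sqrt ha]
  push_cast
  ring

theorem herz_schur_witness_transfer_general
    {G H X : Type*}
    [Group G] [MeasurableSpace G]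
    [Group H] [TopologicalSpace H] [MeasurableSpace H] [BorelSpace H]
    [MeasurableSpace X]
    [MulAction G X] (hact : Measurable fun p : G × X => p.1 • p.2)
    (μ : Measure X) [IsProbabilityMeasure μ]
    -- the Radon–Nikodym cocycle of the action
    (χ : G → X → ℝ)
    (hχmeas : Measurable fun p : G × X => χ p.1 p.2)
    (hχnonneg : ∀ g x, 0 ≤ χ g x)
    (hχRN : ∀ g : G, ∀ f : X → ℝ≥0∞, Measurable f →
      ∫⁻ x, f (g • x) * ENNReal.ofReal (χ g x) ∂μ = ∫⁻ x, f x ∂μ)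
    (hχcoc : ∀ g h : G, ∀ᵐ x ∂μ, χ (g * h) x = χ g (h • x) * χ h x)
    -- the Borel cocycle
    (α : G → X → H)
    (hαmeas : Measurable fun p : G × X => α p.1 p.2)
    (hαcoc : ∀ g h : G, ∀ᵐ x ∂μ, α (g * h) x = α g (h • x) * α h x)
    -- the Hilbert space ℋ and the bounded continuous witnesses ξ, η for u
    {E : Type*} [NormedAddCommGroup E] [InnerProductSpace ℂ E]
    (ξ η : H → E) (hξcont : Continuous ξ)
    (Cξ Cη : ℝ) (hξbdd : ∀ h, ‖ξ h‖ ≤ Cξ) (hηbdd : ∀ h, ‖η h‖ ≤ Cη)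
    (u : H → ℂ) (hu : ∀ s t : H, u (t⁻¹ * s) = inner ℂ (ξ s) (η t)) :
    -- (1) the `L²`-norm bounds on `ξ̂_g` and `η̂_g`
    (∀ g : G,
      ∫⁻ x, ENNReal.ofReal (‖Real.sqrt (χ g⁻¹ x) • ξ ((α g⁻¹ x)⁻¹)‖ ^ 2) ∂μ ≤
        ENNReal.ofReal ((⨆ h : H, ‖ξ h‖) ^ 2) ∧
      ∫⁻ x, ENNReal.ofReal (‖Real.sqrt (χ g⁻¹ x) • η ((α g⁻¹ x)⁻¹)‖ ^ 2) ∂μ ≤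
        ENNReal.ofReal ((⨆ h : H, ‖η h‖) ^ 2)) ∧
    -- (2) `û(h⁻¹g) = ∫ ⟪ξ̂_g(x), η̂_h(x)⟫ dμ(x)`
    (∀ g h : G,
      ∫ x, u (α (h⁻¹ * g) x) * (Real.sqrt (χ (h⁻¹ * g) x) : ℂ) ∂μ =
      ∫ x, (inner ℂ (Real.sqrt (χ g⁻¹ x) • ξ ((α g⁻¹ x)⁻¹))
        (Real.sqrt (χ h⁻¹ x) • η ((α h⁻¹ x)⁻¹)) : ℂ) ∂μ) := by
  have hmass : ∀ g, ∫⁻ x, ENNReal.ofReal (χ g x) ∂μ ≤ 1 := fun g => by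
    simpa using (hχRN g 1 measurable_const).le
  have hle_iSup : ∀ (ζ : H → E) (C : ℝ), (∀ h, ‖ζ h‖ ≤ C) → ∀ h, ‖ζ h‖ ≤ ⨆ h, ‖ζ h‖ :=
    fun ζ C hC => le_ciSup ⟨C, forall_mem_range.2 hC⟩
  refine ⟨fun g => ⟨?_, ?_⟩, fun g h => ?_⟩
  · exact lintegral_ofReal_norm_sqrt_smul_sq_le (hχnonneg _) (hmass _)
      fun x => hle_iSup ξ Cξ hξbdd _
  · exact lintegral_ofReal_norm_sqrt_smul_sq_le (hχnonneg _) (hmass _)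
      fun x => hle_iSup η Cη hηbdd _
  have hu_meas : Measurable u := by
    have hu1 : u = fun s => inner ℂ (ξ s) (η 1) := funext fun s => by simpa using hu s 1
    exact hu1 ▸ (hξcont.inner continuous_const).measurable
  have hχ_meas (k : G) : Measurable (χ k) := hχmeas.comp measurable_prodMk_left
  have hf_meas : Measurable fun x => u (α (h⁻¹ * g) x) * (√(χ (h⁻¹ * g) x) : ℂ) :=
    (hu_meas.comp (hαmeas.comp measurable_prodMk_left)).mul
      (Complex.measurable_ofReal.comp (hχ_meas _).sqrt)
  rw [integral_eq_integral_smul_comp_of_lintegral_comp_mul (hact.comp measurable_prodMk_left)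
    (hχ_meas g⁻¹) (hχnonneg g⁻¹) (hχRN g⁻¹) hf_meas.aestronglyMeasurable]
  refine integral_congr_ae ?_
  filter_upwards [hαcoc (h⁻¹ * g) g⁻¹, hχcoc (h⁻¹ * g) g⁻¹] with x hα hχ
  rw [mul_inv_cancel_right] at hα hχ
  exact real_smul_mul_sqrt_eq_inner_sqrt_smul hu (hχnonneg _ _) (hχnonneg _ _) hχ hα

/-- Computations in the proof of Lemma 2.1(a): given witnesses `ξ, η : H → ℋ` for a
Herz–Schur multiplier `u` on `H` (so `u(t⁻¹s) = ⟪ξ(s), η(t)⟫`), the vectors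
`ξ̂_g(x) = √(χ(g⁻¹, x)) • ξ(α(g⁻¹, x)⁻¹)` and `η̂_g(x) = √(χ(g⁻¹, x)) • η(α(g⁻¹, x)⁻¹)`
satisfy `∫ ‖ξ̂_g‖² dμ ≤ (sup ‖ξ‖)²`, `∫ ‖η̂_g‖² dμ ≤ (sup ‖η‖)²`, and
`û(h⁻¹g) = ∫ ⟪ξ̂_g(x), η̂_h(x)⟫ dμ(x)`. -/
theorem herz_schur_witness_transfer
    {G H X : Type*}
    [Group G] [TopologicalSpace G] [IsTopologicalGroup G] [LocallyCompactSpace G]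
    [SecondCountableTopology G] [T2Space G] [MeasurableSpace G] [BorelSpace G]
    [Group H] [TopologicalSpace H] [IsTopologicalGroup H] [LocallyCompactSpace H]
    [SecondCountableTopology H] [T2Space H] [MeasurableSpace H] [BorelSpace H]
    [MeasurableSpace X] [StandardBorelSpace X]
    [MulAction G X] (hact : Measurable fun p : G × X => p.1 • p.2)
    (μ : Measure X) [IsProbabilityMeasure μ]
    -- the Radon–Nikodym cocycle of the action
    (χ : G → X → ℝ)
    (hχmeas : Measurable fun p : G × X => χ p.1 p.2)
    (hχnonneg : ∀ g x, 0 ≤ χ g x)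
    (hχRN : ∀ g : G, ∀ f : X → ℝ≥0∞, Measurable f →
      ∫⁻ x, f (g • x) * ENNReal.ofReal (χ g x) ∂μ = ∫⁻ x, f x ∂μ)
    (hχcoc : ∀ g h : G, ∀ᵐ x ∂μ, χ (g * h) x = χ g (h • x) * χ h x)
    -- the Borel cocycle
    (α : G → X → H)
    (hαmeas : Measurable fun p : G × X => α p.1 p.2)
    (hαcoc : ∀ g h : G, ∀ᵐ x ∂μ, α (g * h) x = α g (h • x) * α h x)
    -- the Hilbert space ℋ and the bounded continuous witnesses ξ, η for u
    {E : Type*} [NormedAddCommGroup E] [InnerProductSpace ℂ E] [CompleteSpace E]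
    (ξ η : H → E) (hξcont : Continuous ξ) (hηcont : Continuous η)
    (Cξ Cη : ℝ) (hξbdd : ∀ h, ‖ξ h‖ ≤ Cξ) (hηbdd : ∀ h, ‖η h‖ ≤ Cη)
    (u : H → ℂ) (hu : ∀ s t : H, u (t⁻¹ * s) = inner ℂ (ξ s) (η t)) :
    -- (1) the `L²`-norm bounds on `ξ̂_g` and `η̂_g`
    (∀ g : G,
      ∫⁻ x, ENNReal.ofReal (‖Real.sqrt (χ g⁻¹ x) • ξ ((α g⁻¹ x)⁻¹)‖ ^ 2) ∂μ ≤
        ENNReal.ofReal ((⨆ h : H, ‖ξ h‖) ^ 2) ∧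
      ∫⁻ x, ENNReal.ofReal (‖Real.sqrt (χ g⁻¹ x) • η ((α g⁻¹ x)⁻¹)‖ ^ 2) ∂μ ≤
        ENNReal.ofReal ((⨆ h : H, ‖η h‖) ^ 2)) ∧
    -- (2) `û(h⁻¹g) = ∫ ⟪ξ̂_g(x), η̂_h(x)⟫ dμ(x)`
    (∀ g h : G,
      ∫ x, u (α (h⁻¹ * g) x) * (Real.sqrt (χ (h⁻¹ * g) x) : ℂ) ∂μ =
      ∫ x, (inner ℂ (Real.sqrt (χ g⁻¹ x) • ξ ((α g⁻¹ x)⁻¹))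
        (Real.sqrt (χ h⁻¹ x) • η ((α h⁻¹ x)⁻¹)) : ℂ) ∂μ) :=
  herz_schur_witness_transfer_general hact μ χ hχmeas hχnonneg hχRN hχcoc α hαmeas hαcoc ξ η hξcont
    Cξ Cη hξbdd hηbdd u hu
end

section
/- Let u : H → ℂ be a bounded continuous positive definite function. Then û : G → ℂ, defined by û(g) = ∫_X u(α(g, x))·√(χ(g, x)) dμ(x), is positive definite on G. -/
open MeasureTheory Filter Set
open scoped ENNReal ComplexOrder

/-!
Translating by `a = gᵢ⁻¹` and using the cocycle identities for `χ` and `α` rewrites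
`û(gⱼ⁻¹ gᵢ)` as `∫ u(α(gⱼ⁻¹, x) α(gᵢ⁻¹, x)⁻¹) √χ(gᵢ⁻¹, x) √χ(gⱼ⁻¹, x) dμ(x)`. For each fixed `x`
the quadratic form `∑ cᵢ c̄ⱼ (…)` of these integrands is then the positive definiteness sum of `u`
at the points `α(gᵢ⁻¹, x)⁻¹` with coefficients `cᵢ √χ(gᵢ⁻¹, x)`, hence nonnegative, and so is
its integral. Boundedness of `u` and `√s √t ≤ (s + t)/2` make every integrand integrable.
-/

section ChangeOfVariables

variable {X E : Type*} [MeasurableSpace X] {μ : Measure X} {T : X → X} {ρ : X → ℝ}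
  [NormedAddCommGroup E] [NormedSpace ℝ E]

theorem integrable_of_lintegral_comp_mul_eq [IsFiniteMeasure μ] (hρm : AEStronglyMeasurable ρ μ)
    (hρ0 : ∀ x, 0 ≤ ρ x)
    (hρ : ∀ f : X → ℝ≥0∞, Measurable f → ∫⁻ x, f (T x) * ENNReal.ofReal (ρ x) ∂μ = ∫⁻ x, f x ∂μ) :
    Integrable ρ μ := by
  refine ⟨hρm, ?_⟩
  rw [hasFiniteIntegral_iff_ofReal (Eventually.of_forall hρ0)]
  simpa using (hρ (fun _ => 1) measurable_const).trans_lt (by simp)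

theorem map_withDensity_eq_of_lintegral_comp_mul_eq (hT : Measurable T) (hρm : Measurable ρ)
    (hρ : ∀ f : X → ℝ≥0∞, Measurable f → ∫⁻ x, f (T x) * ENNReal.ofReal (ρ x) ∂μ = ∫⁻ x, f x ∂μ) :
    (μ.withDensity fun x => ENNReal.ofReal (ρ x)).map T = μ :=
  Measure.ext_of_lintegral _ fun f hf => by
    rw [lintegral_map hf hT, lintegral_withDensity_eq_lintegral_mul _ hρm.ennreal_ofReal
      (g := fun x => f (T x)) (hf.comp hT), ← hρ f hf]
    simp only [Pi.mul_apply, mul_comm]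

theorem integral_eq_integral_smul_comp (hT : Measurable T) (hρm : Measurable ρ)
    (hρ0 : ∀ x, 0 ≤ ρ x)
    (hρ : ∀ f : X → ℝ≥0∞, Measurable f → ∫⁻ x, f (T x) * ENNReal.ofReal (ρ x) ∂μ = ∫⁻ x, f x ∂μ)
    {f : X → E} (hf : AEStronglyMeasurable f μ) :
    ∫ x, f x ∂μ = ∫ x, ρ x • f (T x) ∂μ := by
  have hmap := map_withDensity_eq_of_lintegral_comp_mul_eq hT hρm hρ
  calc ∫ x, f x ∂μ
      = ∫ x, f x ∂(μ.withDensity fun x => ENNReal.ofReal (ρ x)).map T := by rw [hmap]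
    _ = ∫ x, f (T x) ∂μ.withDensity fun x => ENNReal.ofReal (ρ x) :=
        integral_map hT.aemeasurable (by rwa [hmap])
    _ = ∫ x, ρ x • f (T x) ∂μ := by
        rw [integral_withDensity_eq_integral_toReal_smul hρm.ennreal_ofReal
          (Eventually.of_forall fun _ => ENNReal.ofReal_lt_top)]
        simp only [ENNReal.toReal_ofReal (hρ0 _)]

end ChangeOfVariables

theorem Real.sqrt_mul_sqrt_le_abs_add_abs (a b : ℝ) : √a * √b ≤ (|a| + |b|) / 2 := by
  nlinarith [sq_nonneg (√a - √b), Real.sq_sqrt' (x := a), Real.sq_sqrt' (x := b),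
    max_le (le_abs_self a) (abs_nonneg a), max_le (le_abs_self b) (abs_nonneg b)]

theorem MeasureTheory.Integrable.sqrt_mul_sqrt {X : Type*} [MeasurableSpace X] {μ : Measure X}
    {f g : X → ℝ} (hf : Integrable f μ) (hg : Integrable g μ) :
    Integrable (fun x => √(f x) * √(g x)) μ :=
  ((hf.abs.add hg.abs).div_const 2).mono'
    (hf.aemeasurable.sqrt.mul hg.aemeasurable.sqrt).aestronglyMeasurable
    (Eventually.of_forall fun x => (Real.norm_of_nonneg (by positivity)).trans_le
      (Real.sqrt_mul_sqrt_le_abs_add_abs (f x) (g x)))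

theorem IsPosDefFn.sum_mul_inv_nonneg {H : Type*} [Group H] {u : H → ℂ} (hu : IsPosDefFn u)
    {n : ℕ} (a : Fin n → H) (c : Fin n → ℂ) :
    0 ≤ ∑ i, ∑ j, c i * (starRingEnd ℂ) (c j) * u (a j * (a i)⁻¹) := by
  simpa using hu n (fun i => (a i)⁻¹) c

section Transfer

variable {G H X : Type*} [Group H] (χ : G → X → ℝ) (α : G → X → H) (u : H → ℂ)

/-- The integrand of `û (b * a⁻¹)` after the change of variables `x ↦ a • x`. -/
noncomputable def transferKernel (a b : G) (x : X) : ℂ :=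
  u (α b x * (α a x)⁻¹) * (√(χ a x) : ℂ) * (√(χ b x) : ℂ)

theorem transferKernel_sum_nonneg (hu : IsPosDefFn u) {n : ℕ} (a : Fin n → G) (c : Fin n → ℂ)
    (x : X) :
    0 ≤ ∑ i, ∑ j, c i * (starRingEnd ℂ) (c j) * transferKernel χ α u (a i) (a j) x := by
  convert hu.sum_mul_inv_nonneg (fun i => α (a i) x) (fun i => c i * (√(χ (a i) x) : ℂ))
    using 3 with i _ j _
  simp only [transferKernel, map_mul, Complex.conj_ofReal]
  ring

variable [MeasurableSpace H] [MeasurableSpace X] {μ : Measure X}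

theorem integrable_transferKernel [MeasurableMul₂ H] [MeasurableInv H]
    (hα : ∀ g, Measurable (α g)) (hu : Measurable u) {C : ℝ} (hubdd : ∀ h, ‖u h‖ ≤ C)
    {a b : G} (ha : Integrable (χ a) μ) (hb : Integrable (χ b) μ) :
    Integrable (transferKernel χ α u a b) μ := by
  unfold transferKernel
  simp only [mul_assoc, ← Complex.ofReal_mul]
  exact (ha.sqrt_mul_sqrt hb).ofReal.bdd_mul
    (hu.comp ((hα b).mul (hα a).inv)).aestronglyMeasurable (Eventually.of_forall fun _ => hubdd _)

theorem integral_eq_integral_transferKernel [Group G] [MulAction G X]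
    (hact : ∀ g : G, Measurable fun x : X => g • x) (hχm : ∀ g, Measurable (χ g))
    (hχ0 : ∀ g x, 0 ≤ χ g x)
    (hχRN : ∀ g : G, ∀ f : X → ℝ≥0∞, Measurable f →
      ∫⁻ x, f (g • x) * ENNReal.ofReal (χ g x) ∂μ = ∫⁻ x, f x ∂μ)
    (hχcoc : ∀ g h : G, ∀ᵐ x ∂μ, χ (g * h) x = χ g (h • x) * χ h x)
    (hαm : ∀ g, Measurable (α g)) (hαcoc : ∀ g h : G, ∀ᵐ x ∂μ, α (g * h) x = α g (h • x) * α h x)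
    (hu : Measurable u) (a b : G) :
    ∫ x, u (α (b * a⁻¹) x) * (√(χ (b * a⁻¹) x) : ℂ) ∂μ = ∫ x, transferKernel χ α u a b x ∂μ := by
  have hf : Measurable fun x => u (α (b * a⁻¹) x) * (√(χ (b * a⁻¹) x) : ℂ) :=
    (hu.comp (hαm _)).mul (Complex.measurable_ofReal.comp (hχm _).sqrt)
  rw [integral_eq_integral_smul_comp (hact a) (hχm a) (hχ0 a) (hχRN a) hf.aestronglyMeasurable]
  refine integral_congr_ae ?_
  filter_upwards [hαcoc (b * a⁻¹) a, hχcoc (b * a⁻¹) a] with x hαx hχx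
  rw [inv_mul_cancel_right] at hαx hχx
  have hsqrt : √(χ b x) = √(χ (b * a⁻¹) (a • x)) * √(χ a x) := by
    rw [hχx, Real.sqrt_mul (hχ0 _ _)]
  rw [Complex.real_smul, ← Real.mul_self_sqrt (hχ0 a x), transferKernel, hsqrt,
    eq_mul_inv_of_mul_eq hαx.symm]
  push_cast
  ring

end Transfer

theorem posdef_transfer_general
    {G H X : Type*}
    [Group G] [MeasurableSpace G]
    [Group H] [TopologicalSpace H] [IsTopologicalGroup H]
    [SecondCountableTopology H] [MeasurableSpace H] [BorelSpace H]
    [MeasurableSpace X]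
    [MulAction G X] (hact : Measurable fun p : G × X => p.1 • p.2)
    (μ : Measure X) [IsProbabilityMeasure μ]
    -- the Radon–Nikodym cocycle of the action
    (χ : G → X → ℝ)
    (hχmeas : Measurable fun p : G × X => χ p.1 p.2)
    (hχnonneg : ∀ g x, 0 ≤ χ g x)
    (hχRN : ∀ g : G, ∀ f : X → ℝ≥0∞, Measurable f →
      ∫⁻ x, f (g • x) * ENNReal.ofReal (χ g x) ∂μ = ∫⁻ x, f x ∂μ)
    (hχcoc : ∀ g h : G, ∀ᵐ x ∂μ, χ (g * h) x = χ g (h • x) * χ h x)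
    -- the Borel cocycle
    (α : G → X → H)
    (hαmeas : Measurable fun p : G × X => α p.1 p.2)
    (hαcoc : ∀ g h : G, ∀ᵐ x ∂μ, α (g * h) x = α g (h • x) * α h x)
    -- `u` is a bounded continuous positive definite function on `H`
    (u : H → ℂ) (hucont : Continuous u) (C : ℝ) (hubdd : ∀ h, ‖u h‖ ≤ C)
    (hupd : IsPosDefFn u) :
    IsPosDefFn (fun g : G => ∫ x, u (α g x) * (Real.sqrt (χ g x) : ℂ) ∂μ) := by
  have hsmul : ∀ g : G, Measurable fun x : X => g • x := fun g => hact.comp measurable_prodMk_left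
  have hχm : ∀ g, Measurable (χ g) := fun g => hχmeas.comp measurable_prodMk_left
  have hαm : ∀ g, Measurable (α g) := fun g => hαmeas.comp measurable_prodMk_left
  have hχint : ∀ g, Integrable (χ g) μ := fun g =>
    integrable_of_lintegral_comp_mul_eq (hχm g).aestronglyMeasurable (hχnonneg g) (hχRN g)
  intro n g c
  have hK : ∀ a b, Integrable (transferKernel χ α u a b) μ := fun a b =>
    integrable_transferKernel χ α u hαm hucont.measurable hubdd (hχint a) (hχint b)
  have hû : ∀ i j, ∫ x, u (α ((g j)⁻¹ * g i) x) * (√(χ ((g j)⁻¹ * g i) x) : ℂ) ∂μ =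
      ∫ x, transferKernel χ α u (g i)⁻¹ (g j)⁻¹ x ∂μ := fun i j => by
    simpa using integral_eq_integral_transferKernel χ α u hsmul hχm hχnonneg hχRN hχcoc hαm hαcoc
      hucont.measurable (g i)⁻¹ (g j)⁻¹
  calc (0 : ℂ)
      ≤ ∫ x, ∑ i, ∑ j, c i * (starRingEnd ℂ) (c j) * transferKernel χ α u (g i)⁻¹ (g j)⁻¹ x ∂μ :=
        integral_nonneg fun x => transferKernel_sum_nonneg χ α u hupd (fun i => (g i)⁻¹) c x
    _ = _ := by
        simp only [hû, ← integral_const_mul]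
        rw [integral_finsetSum _ fun i _ => integrable_finsetSum _ fun j _ => (hK _ _).const_mul _]
        exact Finset.sum_congr rfl fun i _ => integral_finsetSum _ fun j _ => (hK _ _).const_mul _

/-- Lemma 2.1(a), positive-definite case: if `u : H → ℂ` is a bounded continuous positive
definite function, then `û(g) = ∫_X u(α(g, x))·√(χ(g, x)) dμ(x)` is positive definite
on `G`. -/
theorem posdef_transfer
    {G H X : Type*}
    [Group G] [TopologicalSpace G] [IsTopologicalGroup G] [LocallyCompactSpace G]
    [SecondCountableTopology G] [T2Space G] [MeasurableSpace G] [BorelSpace G]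
    [Group H] [TopologicalSpace H] [IsTopologicalGroup H] [LocallyCompactSpace H]
    [SecondCountableTopology H] [T2Space H] [MeasurableSpace H] [BorelSpace H]
    [MeasurableSpace X] [StandardBorelSpace X]
    [MulAction G X] (hact : Measurable fun p : G × X => p.1 • p.2)
    (μ : Measure X) [IsProbabilityMeasure μ]
    -- the Radon–Nikodym cocycle of the action
    (χ : G → X → ℝ)
    (hχmeas : Measurable fun p : G × X => χ p.1 p.2)
    (hχnonneg : ∀ g x, 0 ≤ χ g x)
    (hχRN : ∀ g : G, ∀ f : X → ℝ≥0∞, Measurable f →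
      ∫⁻ x, f (g • x) * ENNReal.ofReal (χ g x) ∂μ = ∫⁻ x, f x ∂μ)
    (hχcoc : ∀ g h : G, ∀ᵐ x ∂μ, χ (g * h) x = χ g (h • x) * χ h x)
    -- the Borel cocycle
    (α : G → X → H)
    (hαmeas : Measurable fun p : G × X => α p.1 p.2)
    (hαcoc : ∀ g h : G, ∀ᵐ x ∂μ, α (g * h) x = α g (h • x) * α h x)
    -- `u` is a bounded continuous positive definite function on `H`
    (u : H → ℂ) (hucont : Continuous u) (C : ℝ) (hubdd : ∀ h, ‖u h‖ ≤ C)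
    (hupd : IsPosDefFn u) :
    IsPosDefFn (fun g : G => ∫ x, u (α g x) * (Real.sqrt (χ g x) : ℂ) ∂μ) :=
  posdef_transfer_general hact μ χ hχmeas hχnonneg hχRN hχcoc α hαmeas hαcoc u hucont C hubdd hupd
end

section
/- Suppose the Borel cocycle α : G × X → H is proper with respect to μ, and let u : H → ℂ be a continuous function vanishing at infinity. Then û vanishes at infinity in the following sense: for every ε > 0 there is a compact set K ⊆ G such that |û(g)| ≤ ε for all g ∈ G ∖ K, where û(g) = ∫_X u(α(g, x))·√(χ(g, x)) dμ(x). -/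
open MeasureTheory Filter Set
open scoped ENNReal

/-- The set `K(A, L)` of elements `g ∈ G` such that
`μ {x ∈ A ∩ g⁻¹A : α(g, x) ∈ L} > 0`. -/
def KSet {G H X : Type*} [Group G] [MeasurableSpace X] [MulAction G X]
    (μ : Measure X) (α : G → X → H) (A : Set X) (L : Set H) : Set G :=
  {g : G | 0 < μ {x | x ∈ A ∧ g • x ∈ A ∧ α g x ∈ L}}

/-- Properness of a cocycle `α : G × X → H` with respect to `μ`. -/
def ProperCocycle {G H X : Type*} [Group G] [TopologicalSpace G] [TopologicalSpace H]
    [MeasurableSpace X] [MulAction G X] (μ : Measure X) (α : G → X → H) : Prop :=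
  (∀ A : Set X, MeasurableSet A → ∀ ε : ℝ, 0 < ε → ∀ K : Set G, IsCompact K →
    ∃ A' : Set X, A' ⊆ A ∧ MeasurableSet A' ∧ μ (A \ A') < ENNReal.ofReal ε ∧
      IsCompact (closure (Set.image2 α K A'))) ∧
  (∀ L : Set H, IsCompact L → ∀ ε : ℝ, 0 < ε →
    ∃ A : Set X, MeasurableSet A ∧ μ (Set.univ \ A) ≤ ENNReal.ofReal ε ∧
      IsCompact (closure (KSet μ α A L)))

/-!
Write `s = √χ(g, ·)`. The Radon–Nikodym identity gives `∫_{g⁻¹B} s² dμ = μ(B)`, in particular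
`‖s‖₂ = 1`. Choose `L` compact with `|u| ≤ ε/2` off `L`, and by properness a set `A` with `μ(Aᶜ)`
small and `K(A, L)` relatively compact. For `g` outside the closure of `K(A, L)`, almost every `x`
with `x ∈ A` and `g·x ∈ A` has `α(g, x) ∉ L`, so with `C` a bound for `|u|`
`|u(α(g, x))| s(x) ≤ (ε/2) s(x) + C 1_{Aᶜ}(x) s(x) + C 1_{g⁻¹Aᶜ}(x) s(x)`.
By Cauchy–Schwarz the last two terms integrate to at most `C √μ(Aᶜ)` each: the first because
`μ(Aᶜ)` is small, the second because its weight `∫_{g⁻¹Aᶜ} s²` equals `μ(Aᶜ)`.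
-/

section SetLIntegral

variable {X : Type*} [MeasurableSpace X] {μ : Measure X}

theorem setLIntegral_le_mul_of_le_sq {f : X → ℝ≥0∞} {B : Set X} {a c : ℝ≥0∞}
    (hf : AEMeasurable f (μ.restrict B)) (hμB : μ B ≤ a ^ 2)
    (hfB : ∫⁻ x in B, f x ^ 2 ∂μ ≤ c ^ 2) :
    ∫⁻ x in B, f x ∂μ ≤ a * c := by
  have holder := ENNReal.lintegral_mul_le_Lp_mul_Lq (μ.restrict B) .two_two
    aemeasurable_const hf (f := 1)
  simp only [Pi.mul_apply, Pi.one_apply, one_mul, ENNReal.rpow_ofNat, one_pow, setLIntegral_one] at holder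
  calc ∫⁻ x in B, f x ∂μ ≤ μ B ^ (1 / 2 : ℝ) * (∫⁻ x in B, f x ^ 2 ∂μ) ^ (1 / 2 : ℝ) := holder
    _ ≤ (a ^ 2) ^ (1 / 2 : ℝ) * (c ^ 2) ^ (1 / 2 : ℝ) := by gcongr
    _ = a * c := by
      have sqrt_sq (y : ℝ≥0∞) : (y ^ 2) ^ (1 / 2 : ℝ) = y := by
        simpa using ENNReal.pow_rpow_inv_natCast two_ne_zero y
      rw [sqrt_sq, sqrt_sq]

theorem lintegral_mul_le_of_ae_le_off {F s : X → ℝ≥0∞} {B₁ B₂ : Set X} {C δ : ℝ≥0∞}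
    (hs : Measurable s) (hB₁ : MeasurableSet B₁) (hB₂ : MeasurableSet B₂)
    (hFC : ∀ x, F x ≤ C) (hFδ : ∀ᵐ x ∂μ, x ∉ B₁ → x ∉ B₂ → F x ≤ δ) :
    ∫⁻ x, F x * s x ∂μ ≤
      δ * ∫⁻ x, s x ∂μ + C * ∫⁻ x in B₁, s x ∂μ + C * ∫⁻ x in B₂, s x ∂μ := by
  have pointwise : ∀ᵐ x ∂μ, F x * s x ≤ δ * s x + C * B₁.indicator s x + C * B₂.indicator s x := by
    filter_upwards [hFδ] with x hx
    by_cases h₁ : x ∈ B₁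
    · calc F x * s x ≤ C * B₁.indicator s x := by
            rw [indicator_of_mem h₁]; gcongr; exact hFC x
        _ ≤ _ := le_add_self.trans le_self_add
    by_cases h₂ : x ∈ B₂
    · calc F x * s x ≤ C * B₂.indicator s x := by
            rw [indicator_of_mem h₂]; gcongr; exact hFC x
        _ ≤ _ := le_add_self
    · calc F x * s x ≤ δ * s x := by gcongr; exact hx h₁ h₂
        _ ≤ _ := le_self_add.trans le_self_add
  calc ∫⁻ x, F x * s x ∂μ
      ≤ ∫⁻ x, δ * s x + C * B₁.indicator s x + C * B₂.indicator s x ∂μ :=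
        lintegral_mono_ae pointwise
    _ = _ := by
      rw [lintegral_add_right _ ((hs.indicator hB₂).const_mul C),
        lintegral_add_right _ ((hs.indicator hB₁).const_mul C), lintegral_const_mul _ hs,
        lintegral_const_mul _ (hs.indicator hB₁), lintegral_const_mul _ (hs.indicator hB₂),
        lintegral_indicator hB₁, lintegral_indicator hB₂]

theorem setLIntegral_preimage_eq_of_lintegral_comp_mul {T : X → X} {ρ : X → ℝ≥0∞}
    (hT : Measurable T)
    (hρ : ∀ f : X → ℝ≥0∞, Measurable f → ∫⁻ x, f (T x) * ρ x ∂μ = ∫⁻ x, f x ∂μ)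
    {B : Set X} (hB : MeasurableSet B) :
    ∫⁻ x in T ⁻¹' B, ρ x ∂μ = μ B := by
  have := hρ (B.indicator 1) (measurable_one.indicator hB)
  rw [lintegral_indicator_one hB] at this
  rw [← this, ← lintegral_indicator (hT hB)]
  congr 1 with x
  by_cases hx : T x ∈ B <;> simp [hx]

end SetLIntegral

theorem Continuous.exists_enorm_le_of_tendsto_cocompact {H E : Type*} [TopologicalSpace H]
    [SeminormedAddGroup E] {u : H → E} (hu : Continuous u)
    (h0 : Tendsto u (cocompact H) (nhds 0)) : ∃ C ≠ ∞, ∀ h, ‖u h‖ₑ ≤ C := by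
  obtain ⟨C, hC⟩ := isBounded_iff_forall_norm_le.1 (ZeroAtInftyContinuousMap.isBounded_range ⟨⟨u, hu⟩, h0⟩)
  exact ⟨ENNReal.ofReal C, ENNReal.ofReal_ne_top, fun h => by
    rw [← ofReal_norm]; exact ENNReal.ofReal_le_ofReal (hC _ ⟨h, rfl⟩)⟩

theorem enorm_integral_comp_mul_sqrt_le {G H X : Type*} [Group G] [MeasurableSpace X]
    [MulAction G X] {μ : Measure X} [IsProbabilityMeasure μ] {χ : G → X → ℝ}
    {α : G → X → H} {u : H → ℂ} {g : G} {A : Set X} {L : Set H} {C δ b : ℝ≥0∞}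
    (hg : Measurable (g • · : X → X)) (hχg : Measurable (χ g)) (hχnonneg : ∀ x, 0 ≤ χ g x)
    (hχRN : ∀ f : X → ℝ≥0∞, Measurable f →
      ∫⁻ x, f (g • x) * ENNReal.ofReal (χ g x) ∂μ = ∫⁻ x, f x ∂μ)
    (hA : MeasurableSet A) (hAc : μ Aᶜ ≤ b ^ 2) (hC : ∀ h, ‖u h‖ₑ ≤ C)
    (hδ : ∀ h ∉ L, ‖u h‖ₑ ≤ δ) (hgK : g ∉ KSet μ α A L) :
    ‖∫ x, u (α g x) * (Real.sqrt (χ g x) : ℂ) ∂μ‖ₑ ≤ δ + 2 * C * b := by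
  set s : X → ℝ≥0∞ := fun x => ENNReal.ofReal (Real.sqrt (χ g x))
  have hs : Measurable s := hχg.sqrt.ennreal_ofReal
  have hs_sq : ∀ x, s x ^ 2 = ENNReal.ofReal (χ g x) := fun x => by
    rw [← ENNReal.ofReal_pow (Real.sqrt_nonneg _), Real.sq_sqrt (hχnonneg x)]
  have weight_preimage : ∀ B, MeasurableSet B → ∫⁻ x in (g • ·) ⁻¹' B, s x ^ 2 ∂μ = μ B :=
    fun B hB => by
      simp_rw [hs_sq]
      exact setLIntegral_preimage_eq_of_lintegral_comp_mul hg hχRN hB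
  have weight_le_one : ∀ B, ∫⁻ x in B, s x ^ 2 ∂μ ≤ 1 ^ 2 := fun B => calc
    ∫⁻ x in B, s x ^ 2 ∂μ ≤ ∫⁻ x in (g • ·) ⁻¹' univ, s x ^ 2 ∂μ := by
      rw [preimage_univ, setLIntegral_univ]; exact setLIntegral_le_lintegral _ _
    _ = 1 ^ 2 := by rw [weight_preimage _ MeasurableSet.univ, measure_univ, one_pow]
  have hsmall : ∀ᵐ x ∂μ, x ∉ Aᶜ → x ∉ (g • ·) ⁻¹' Aᶜ → ‖u (α g x)‖ₑ ≤ δ := by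
    have hnull : μ {x | x ∈ A ∧ g • x ∈ A ∧ α g x ∈ L} = 0 := nonpos_iff_eq_zero.1 (not_lt.1 hgK)
    filter_upwards [measure_eq_zero_iff_ae_notMem.1 hnull] with x hx hxA hgxA
    exact hδ _ fun hL => hx ⟨not_not.1 hxA, not_not.1 hgxA, hL⟩
  calc ‖∫ x, u (α g x) * (Real.sqrt (χ g x) : ℂ) ∂μ‖ₑ
      ≤ ∫⁻ x, ‖u (α g x) * (Real.sqrt (χ g x) : ℂ)‖ₑ ∂μ := enorm_integral_le_lintegral_enorm _
    _ = ∫⁻ x, ‖u (α g x)‖ₑ * s x ∂μ := by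
      congr 1 with x
      rw [enorm_mul, ← ofReal_norm (Real.sqrt _ : ℂ), Complex.norm_real,
        Real.norm_of_nonneg (Real.sqrt_nonneg _)]
    _ ≤ δ * ∫⁻ x, s x ∂μ + C * ∫⁻ x in Aᶜ, s x ∂μ + C * ∫⁻ x in (g • ·) ⁻¹' Aᶜ, s x ∂μ :=
      lintegral_mul_le_of_ae_le_off hs hA.compl (hg hA.compl) (fun _ => hC _) hsmall
    _ ≤ δ * (1 * 1) + C * (b * 1) + C * (1 * b) := by
      rw [← setLIntegral_univ]
      gcongr
      · exact setLIntegral_le_mul_of_le_sq hs.aemeasurable (by simp) (weight_le_one _)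
      · exact setLIntegral_le_mul_of_le_sq hs.aemeasurable hAc (weight_le_one _)
      · refine setLIntegral_le_mul_of_le_sq hs.aemeasurable (by simpa using prob_le_one) ?_
        rw [weight_preimage _ hA.compl]; exact hAc
    _ = δ + 2 * C * b := by ring

theorem uhat_vanishes_at_infinity_general
    {G H X : Type*}
    [Group G] [TopologicalSpace G] [MeasurableSpace G]
    [TopologicalSpace H]
    [MeasurableSpace X]
    [MulAction G X] (hact : Measurable fun p : G × X => p.1 • p.2)
    (μ : Measure X) [IsProbabilityMeasure μ]
    -- the Radon–Nikodym cocycle of the action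
    (χ : G → X → ℝ)
    (hχmeas : Measurable fun p : G × X => χ p.1 p.2)
    (hχnonneg : ∀ g x, 0 ≤ χ g x)
    (hχRN : ∀ g : G, ∀ f : X → ℝ≥0∞, Measurable f →
      ∫⁻ x, f (g • x) * ENNReal.ofReal (χ g x) ∂μ = ∫⁻ x, f x ∂μ)
    -- the Borel cocycle
    (α : G → X → H)
    (hproper : ProperCocycle μ α)
    -- `u` is continuous and vanishes at infinity
    (u : H → ℂ) (hucont : Continuous u) (huC0 : Tendsto u (cocompact H) (nhds 0)) :
    ∀ ε : ℝ, 0 < ε → ∃ K : Set G, IsCompact K ∧ ∀ g ∉ K,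
      ‖∫ x, u (α g x) * (Real.sqrt (χ g x) : ℂ) ∂μ‖ ≤ ε := by
  intro ε hε
  obtain ⟨C, hC_top, hC⟩ := hucont.exists_enorm_le_of_tendsto_cocompact huC0
  obtain ⟨L, hL, hLu⟩ := (hasBasis_cocompact.tendsto_iff Metric.nhds_basis_closedBall).1 huC0
    (ε / 2) (by positivity)
  obtain ⟨b, hb, hbC⟩ := ENNReal.exists_nnreal_pos_mul_lt (a := 2 * C)
    (ENNReal.mul_ne_top ENNReal.ofNat_ne_top hC_top) (ENNReal.ofReal_pos.2 (half_pos hε)).ne'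
  obtain ⟨A, hA, hAc, hK⟩ := hproper.2 L hL ((b : ℝ) ^ 2) (by positivity)
  refine ⟨_, hK, fun g hg => ?_⟩
  have hû := enorm_integral_comp_mul_sqrt_le (hact.comp measurable_prodMk_left)
    (hχmeas.comp measurable_prodMk_left) (hχnonneg g) (hχRN g) hA
    (by simpa [compl_eq_univ_sdiff, ENNReal.ofReal_pow] using hAc) hC
    (fun h hh => by rw [← ofReal_norm]; exact ENNReal.ofReal_le_ofReal (by simpa using hLu h hh))
    (fun hgK => hg (subset_closure hgK))
  rw [← ENNReal.ofReal_le_ofReal_iff hε.le, ofReal_norm]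
  calc _ ≤ _ := hû
    _ ≤ ENNReal.ofReal (ε / 2) + ENNReal.ofReal (ε / 2) := by
      gcongr; rw [mul_comm]; exact hbC.le
    _ = ENNReal.ofReal ε := by rw [← ENNReal.ofReal_add (by positivity) (by positivity), add_halves]

/-- Lemma 2.1(b): if the Borel cocycle `α` is proper and `u : H → ℂ` is continuous and
vanishes at infinity, then `û(g) = ∫_X u(α(g, x))·√(χ(g, x)) dμ(x)` vanishes at infinity:
for every `ε > 0` there is a compact `K ⊆ G` with `|û(g)| ≤ ε` for all `g ∉ K`. -/
theorem uhat_vanishes_at_infinity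
    {G H X : Type*}
    [Group G] [TopologicalSpace G] [IsTopologicalGroup G] [LocallyCompactSpace G]
    [SecondCountableTopology G] [T2Space G] [MeasurableSpace G] [BorelSpace G]
    [Group H] [TopologicalSpace H] [IsTopologicalGroup H] [LocallyCompactSpace H]
    [SecondCountableTopology H] [T2Space H] [MeasurableSpace H] [BorelSpace H]
    [MeasurableSpace X] [StandardBorelSpace X]
    [MulAction G X] (hact : Measurable fun p : G × X => p.1 • p.2)
    (μ : Measure X) [IsProbabilityMeasure μ]
    -- the Radon–Nikodym cocycle of the action
    (χ : G → X → ℝ)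
    (hχmeas : Measurable fun p : G × X => χ p.1 p.2)
    (hχnonneg : ∀ g x, 0 ≤ χ g x)
    (hχRN : ∀ g : G, ∀ f : X → ℝ≥0∞, Measurable f →
      ∫⁻ x, f (g • x) * ENNReal.ofReal (χ g x) ∂μ = ∫⁻ x, f x ∂μ)
    (hχcoc : ∀ g h : G, ∀ᵐ x ∂μ, χ (g * h) x = χ g (h • x) * χ h x)
    -- the Borel cocycle
    (α : G → X → H)
    (hαmeas : Measurable fun p : G × X => α p.1 p.2)
    (hαcoc : ∀ g h : G, ∀ᵐ x ∂μ, α (g * h) x = α g (h • x) * α h x)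
    (hproper : ProperCocycle μ α)
    -- `u` is continuous and vanishes at infinity
    (u : H → ℂ) (hucont : Continuous u) (huC0 : Tendsto u (cocompact H) (nhds 0)) :
    ∀ ε : ℝ, 0 < ε → ∃ K : Set G, IsCompact K ∧ ∀ g ∉ K,
      ‖∫ x, u (α g x) * (Real.sqrt (χ g x) : ℂ) ∂μ‖ ≤ ε :=
  uhat_vanishes_at_infinity_general hact μ χ hχmeas hχnonneg hχRN α hproper u hucont huC0
end

section
/- Suppose the pair (G, X) is amenable, witnessed by a sequence (f_n) of nonnegative measurable functions on X with ∫_X f_n dμ = 1 such that for every compact set K ⊆ G, sup_{g ∈ K} ∫_X |f_n(g⁻¹·x)·χ(g⁻¹, x) − f_n(x)| dμ(x) → 0 as n → ∞. Then there exists a sequence of probability measures (μ_n) on X and measurable functions χ_n : G × X → ℝ≥0 such that: (a) each μ_n is mutually absolutely continuous with μ; (b) each χ_n is a Radon–Nikodym cocycle for the G-action with respect to μ_n, i.e. ∫ f(g·x)·χ_n(g, x) dμ_n(x) = ∫ f(x) dμ_n(x) for every g ∈ G and every nonnegative measurable f; and (c) for every compact set K ⊆ G, sup_{g ∈ K} ∫_X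 |√(χ_n(g, x)) − 1| dμ_n(x) → 0 as n → ∞. -/
open MeasureTheory Filter Set
open scoped ENNReal

/-!
Tilt `μ` by `w_n = (f_n + c_n) / (1 + c_n)` with `c_n → 0`: this density is bounded below, so
`μ_n = w_n μ` is equivalent to `μ`, and its Radon–Nikodym cocycle is
`χ_n(g, x) = χ(g, x) w_n(g x) / w_n(x)`. By Cauchy–Schwarz and `(√a - √b)² ≤ |a - b|`,
`∫ |√χ_n(g) - 1| dμ_n = ∫ √w_n |√(χ(g) w_n∘g) - √w_n| dμ ≤ (∫ |χ(g) w_n∘g - w_n| dμ)^(1/2)`,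
and `|χ(g) w_n∘g - w_n| ≤ |χ(g) f_n∘g - f_n| + c_n |χ(g) - 1|`, whose integral is at most
`∫ |χ(g) f_n∘g - f_n| dμ + 2 c_n`.
-/

theorem Real.sq_sqrt_sub_sqrt_le_abs_sub (a b : ℝ) : (√a - √b) ^ 2 ≤ |a - b| := by
  have key : ∀ x y : ℝ, 0 ≤ x → 0 ≤ y → (x - y) ^ 2 ≤ |x ^ 2 - y ^ 2| := by
    intro x y hx hy
    rcases le_total x y with hxy | hxy
    · rw [abs_of_nonpos (by nlinarith)]; nlinarith
    · rw [abs_of_nonneg (by nlinarith)]; nlinarith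
  calc (√a - √b) ^ 2 ≤ |√a ^ 2 - √b ^ 2| := key _ _ (Real.sqrt_nonneg a) (Real.sqrt_nonneg b)
    _ = |max a 0 - max b 0| := by rw [Real.sq_sqrt', Real.sq_sqrt']
    _ ≤ |a - b| := abs_max_sub_max_le_abs a b 0

theorem Real.mul_abs_sqrt_div_sub_one {u w : ℝ} (hw : 0 < w) :
    w * |√(u / w) - 1| = √w * |√u - √w| := by
  have hs : 0 < √w := Real.sqrt_pos.2 hw
  have h : √w * (√u / √w - 1) = √u - √w := by field_simp
  rw [Real.sqrt_div' _ hw.le, ← h, abs_mul, abs_of_pos hs, ← mul_assoc, Real.mul_self_sqrt hw.le]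

theorem lintegral_abs_sqrt_div_sub_one_withDensity_le {α : Type*} [MeasurableSpace α]
    {ν : Measure α} {u w : α → ℝ} (hu : Measurable u) (hw : Measurable w) (hw0 : ∀ x, 0 < w x)
    (hw1 : ∫⁻ x, ENNReal.ofReal (w x) ∂ν = 1) :
    ∫⁻ x, ENNReal.ofReal |√(u x / w x) - 1| ∂ν.withDensity (fun x => ENNReal.ofReal (w x)) ≤
      (∫⁻ x, ENNReal.ofReal |u x - w x| ∂ν) ^ (1 / 2 : ℝ) := by
  have hsq : ∀ t : ℝ, 0 ≤ t → ENNReal.ofReal t ^ (2 : ℝ) = ENNReal.ofReal (t ^ 2) := fun t ht => by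
    rw [ENNReal.ofReal_rpow_of_nonneg ht zero_le_two, Real.rpow_two]
  have hdens : ∫⁻ x, ENNReal.ofReal √(w x) ^ (2 : ℝ) ∂ν = 1 := by
    simpa only [hsq _ (Real.sqrt_nonneg _), Real.sq_sqrt (hw0 _).le] using hw1
  have hdiff : ∫⁻ x, ENNReal.ofReal |√(u x) - √(w x)| ^ (2 : ℝ) ∂ν ≤
      ∫⁻ x, ENNReal.ofReal |u x - w x| ∂ν := by
    refine lintegral_mono fun x => ?_
    rw [hsq _ (abs_nonneg _), sq_abs]
    exact ENNReal.ofReal_le_ofReal (Real.sq_sqrt_sub_sqrt_le_abs_sub _ _)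
  rw [lintegral_withDensity_eq_lintegral_mul_non_measurable _ hw.ennreal_ofReal
    (ae_of_all _ fun _ => ENNReal.ofReal_lt_top)]
  calc ∫⁻ x, ENNReal.ofReal (w x) * ENNReal.ofReal |√(u x / w x) - 1| ∂ν
      = ∫⁻ x, ENNReal.ofReal √(w x) * ENNReal.ofReal |√(u x) - √(w x)| ∂ν := by
        refine lintegral_congr fun x => ?_
        rw [← ENNReal.ofReal_mul (hw0 x).le, Real.mul_abs_sqrt_div_sub_one (hw0 x),
          ENNReal.ofReal_mul (Real.sqrt_nonneg _)]
    _ ≤ (∫⁻ x, ENNReal.ofReal √(w x) ^ (2 : ℝ) ∂ν) ^ (1 / 2 : ℝ) *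
          (∫⁻ x, ENNReal.ofReal |√(u x) - √(w x)| ^ (2 : ℝ) ∂ν) ^ (1 / 2 : ℝ) :=
        ENNReal.lintegral_mul_le_Lp_mul_Lq ν .two_two hw.sqrt.ennreal_ofReal.aemeasurable
          (hu.sqrt.sub hw.sqrt).abs.ennreal_ofReal.aemeasurable
    _ ≤ (∫⁻ x, ENNReal.ofReal |u x - w x| ∂ν) ^ (1 / 2 : ℝ) := by
        rw [hdens, ENNReal.one_rpow, one_mul]
        gcongr

section Tilt

variable {X : Type*} [MeasurableSpace X] {μ : Measure X} {T : X → X} {ρ : X → ℝ}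

theorem isProbabilityMeasure_withDensity_ofReal {w : X → ℝ}
    (hw1 : ∫⁻ x, ENNReal.ofReal (w x) ∂μ = 1) :
    IsProbabilityMeasure (μ.withDensity fun x => ENNReal.ofReal (w x)) :=
  ⟨by rw [withDensity_apply _ MeasurableSet.univ, Measure.restrict_univ, hw1]⟩

theorem absolutelyContinuous_withDensity_ofReal {w : X → ℝ} (hw : Measurable w)
    (hw0 : ∀ x, 0 < w x) : μ ≪ μ.withDensity fun x => ENNReal.ofReal (w x) :=
  withDensity_absolutelyContinuous' hw.ennreal_ofReal.aemeasurable
    (ae_of_all _ fun x => (ENNReal.ofReal_pos.2 (hw0 x)).ne')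

theorem lintegral_comp_mul_ofReal_div_withDensity
    (hρ : ∀ F : X → ℝ≥0∞, Measurable F →
      ∫⁻ x, F (T x) * ENNReal.ofReal (ρ x) ∂μ = ∫⁻ x, F x ∂μ)
    {w : X → ℝ} (hw : Measurable w) (hw0 : ∀ x, 0 < w x) {F : X → ℝ≥0∞} (hF : Measurable F) :
    ∫⁻ x, F (T x) * ENNReal.ofReal (ρ x * w (T x) / w x)
        ∂μ.withDensity (fun x => ENNReal.ofReal (w x)) =
      ∫⁻ x, F x ∂μ.withDensity (fun x => ENNReal.ofReal (w x)) := by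
  have hfin : ∀ᵐ x ∂μ, ENNReal.ofReal (w x) < ∞ := ae_of_all _ fun _ => ENNReal.ofReal_lt_top
  rw [lintegral_withDensity_eq_lintegral_mul_non_measurable _ hw.ennreal_ofReal hfin,
    lintegral_withDensity_eq_lintegral_mul_non_measurable _ hw.ennreal_ofReal hfin,
    ← hρ _ (hw.ennreal_ofReal.mul hF)]
  refine lintegral_congr fun x => ?_
  have h : ENNReal.ofReal (w x) * ENNReal.ofReal (ρ x * w (T x) / w x) =
      ENNReal.ofReal (w (T x)) * ENNReal.ofReal (ρ x) := by
    rw [← ENNReal.ofReal_mul (hw0 x).le, ← ENNReal.ofReal_mul (hw0 _).le]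
    congr 1
    field_simp [(hw0 x).ne']
  simp only [Pi.mul_apply]
  rw [mul_left_comm, h]
  ring

theorem integrable_comp_mul_of_lintegral_comp_mul (hT : Measurable T) (hρm : Measurable ρ)
    (hρ0 : ∀ x, 0 ≤ ρ x)
    (hρ : ∀ F : X → ℝ≥0∞, Measurable F →
      ∫⁻ x, F (T x) * ENNReal.ofReal (ρ x) ∂μ = ∫⁻ x, F x ∂μ)
    {f : X → ℝ} (hfm : Measurable f) (hf0 : ∀ x, 0 ≤ f x) (hf : Integrable f μ) :
    Integrable (fun x => f (T x) * ρ x) μ := by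
  refine ⟨((hfm.comp hT).mul hρm).aestronglyMeasurable,
    (hasFiniteIntegral_iff_ofReal (ae_of_all _ fun x => mul_nonneg (hf0 _) (hρ0 x))).2 ?_⟩
  simp_rw [ENNReal.ofReal_mul (hf0 _)]
  rw [hρ _ hfm.ennreal_ofReal]
  exact hf.lintegral_lt_top

end Tilt

section RegularizedDensity

noncomputable def regularizedDensity {X : Type*} (c : ℝ) (f : X → ℝ) (x : X) : ℝ :=
  (f x + c) / (1 + c)

theorem regularizedDensity_pos {X : Type*} {f : X → ℝ} (hf0 : ∀ x, 0 ≤ f x) {c : ℝ} (hc : 0 < c)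
    (x : X) : 0 < regularizedDensity c f x :=
  div_pos (add_pos_of_nonneg_of_pos (hf0 x) hc) (by linarith)

theorem abs_mul_add_div_sub_add_div_le (a b r : ℝ) {c : ℝ} (hc : 0 ≤ c) :
    |r * ((a + c) / (1 + c)) - (b + c) / (1 + c)| ≤ |a * r - b| + c * |r - 1| := by
  have hc1 : 0 < 1 + c := by linarith
  have h : r * ((a + c) / (1 + c)) - (b + c) / (1 + c) = (a * r - b + c * (r - 1)) / (1 + c) := by
    field_simp
    ring
  calc |r * ((a + c) / (1 + c)) - (b + c) / (1 + c)|
      ≤ |a * r - b + c * (r - 1)| := by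
        rw [h, abs_div, abs_of_pos hc1]
        exact div_le_self (abs_nonneg _) (by linarith)
    _ ≤ |a * r - b| + c * |r - 1| :=
        (abs_add_le _ _).trans_eq (by rw [abs_mul, abs_of_nonneg hc])

variable {X : Type*} [MeasurableSpace X] {μ : Measure X} {f : X → ℝ} {c : ℝ}

theorem Measurable.regularizedDensity (hf : Measurable f) :
    Measurable (regularizedDensity c f) :=
  (hf.add_const c).div_const _

theorem lintegral_ofReal_regularizedDensity [IsProbabilityMeasure μ] (hf0 : ∀ x, 0 ≤ f x)
    (hf1 : ∫ x, f x ∂μ = 1) (hc : 0 ≤ c) :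
    ∫⁻ x, ENNReal.ofReal (regularizedDensity c f x) ∂μ = 1 := by
  have hf : Integrable f μ := .of_integral_ne_zero (by simp [hf1])
  have hint : Integrable (regularizedDensity c f) μ := (hf.add (integrable_const c)).div_const _
  rw [← ofReal_integral_eq_lintegral_ofReal hint
      (ae_of_all _ fun x => div_nonneg (add_nonneg (hf0 x) hc) (by positivity))]
  simp only [regularizedDensity]
  rw [integral_div, integral_add hf (integrable_const c), hf1, integral_const, probReal_univ,
    one_smul, div_self (by positivity), ENNReal.ofReal_one]

variable {T : X → X} {ρ : X → ℝ}

theorem lintegral_abs_mul_regularizedDensity_sub_le [IsProbabilityMeasure μ] (hρm : Measurable ρ)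
    (hρ0 : ∀ x, 0 ≤ ρ x) (hρ1 : ∫⁻ x, ENNReal.ofReal (ρ x) ∂μ = 1) (hc : 0 ≤ c) :
    ∫⁻ x, ENNReal.ofReal |ρ x * regularizedDensity c f (T x) - regularizedDensity c f x| ∂μ ≤
      ∫⁻ x, ENNReal.ofReal |f (T x) * ρ x - f x| ∂μ + ENNReal.ofReal (2 * c) := by
  have hm : Measurable fun x => ENNReal.ofReal |ρ x - 1| := by fun_prop
  have hρ_sub_one : ∫⁻ x, ENNReal.ofReal |ρ x - 1| ∂μ ≤ 2 :=
    calc ∫⁻ x, ENNReal.ofReal |ρ x - 1| ∂μ ≤ ∫⁻ x, (ENNReal.ofReal (ρ x) + 1) ∂μ := by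
          refine lintegral_mono fun x => ?_
          rw [← ENNReal.ofReal_one, ← ENNReal.ofReal_add (hρ0 x) zero_le_one]
          exact ENNReal.ofReal_le_ofReal ((abs_sub _ _).trans (by simp [abs_of_nonneg (hρ0 x)]))
      _ = 2 := by
          rw [lintegral_add_right _ measurable_const, hρ1, lintegral_const, measure_univ]
          norm_num
  calc ∫⁻ x, ENNReal.ofReal |ρ x * regularizedDensity c f (T x) - regularizedDensity c f x| ∂μ
      ≤ ∫⁻ x, (ENNReal.ofReal |f (T x) * ρ x - f x| +
          ENNReal.ofReal c * ENNReal.ofReal |ρ x - 1|) ∂μ := by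
        refine lintegral_mono fun x => ?_
        rw [← ENNReal.ofReal_mul hc, ← ENNReal.ofReal_add (abs_nonneg _) (by positivity)]
        exact ENNReal.ofReal_le_ofReal (abs_mul_add_div_sub_add_div_le _ _ _ hc)
    _ ≤ ∫⁻ x, ENNReal.ofReal |f (T x) * ρ x - f x| ∂μ + ENNReal.ofReal c * 2 := by
        rw [lintegral_add_right _ (hm.const_mul _), lintegral_const_mul _ hm]
        gcongr
    _ = ∫⁻ x, ENNReal.ofReal |f (T x) * ρ x - f x| ∂μ + ENNReal.ofReal (2 * c) := by
        rw [ENNReal.ofReal_mul zero_le_two, ENNReal.ofReal_ofNat, mul_comm]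

theorem integral_abs_sqrt_mul_regularizedDensity_div_sub_one_le [IsProbabilityMeasure μ]
    (hT : Measurable T) (hρm : Measurable ρ) (hρ0 : ∀ x, 0 ≤ ρ x)
    (hρ : ∀ F : X → ℝ≥0∞, Measurable F →
      ∫⁻ x, F (T x) * ENNReal.ofReal (ρ x) ∂μ = ∫⁻ x, F x ∂μ)
    (hfm : Measurable f) (hf0 : ∀ x, 0 ≤ f x) (hf1 : ∫ x, f x ∂μ = 1) (hc : 0 < c) {δ : ℝ}
    (hδ : ∫ x, |f (T x) * ρ x - f x| ∂μ ≤ δ) :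
    ∫ x, |√(ρ x * regularizedDensity c f (T x) / regularizedDensity c f x) - 1|
        ∂μ.withDensity (fun x => ENNReal.ofReal (regularizedDensity c f x)) ≤ √(δ + 2 * c) := by
  have hwm : Measurable (regularizedDensity c f) := hfm.regularizedDensity
  have hρ1 : ∫⁻ x, ENNReal.ofReal (ρ x) ∂μ = 1 := by simpa using hρ 1 measurable_const
  have hf : Integrable f μ := .of_integral_ne_zero (by simp [hf1])
  have hint : Integrable (fun x => f (T x) * ρ x - f x) μ :=
    (integrable_comp_mul_of_lintegral_comp_mul hT hρm hρ0 hρ hfm hf0 hf).sub hf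
  have hδ0 : 0 ≤ δ := (integral_nonneg fun _ => abs_nonneg _).trans hδ
  have hδ' : ∫⁻ x, ENNReal.ofReal |f (T x) * ρ x - f x| ∂μ ≤ ENNReal.ofReal δ := by
    rw [← ofReal_integral_eq_lintegral_ofReal hint.abs (ae_of_all _ fun _ => abs_nonneg _)]
    exact ENNReal.ofReal_le_ofReal hδ
  have hlin : ∫⁻ x, ENNReal.ofReal
        |√(ρ x * regularizedDensity c f (T x) / regularizedDensity c f x) - 1|
        ∂μ.withDensity (fun x => ENNReal.ofReal (regularizedDensity c f x)) ≤
      ENNReal.ofReal √(δ + 2 * c) :=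
    calc _ ≤ (∫⁻ x, ENNReal.ofReal
            |ρ x * regularizedDensity c f (T x) - regularizedDensity c f x| ∂μ) ^ (1 / 2 : ℝ) :=
          lintegral_abs_sqrt_div_sub_one_withDensity_le (hρm.mul (hwm.comp hT)) hwm
            (regularizedDensity_pos hf0 hc) (lintegral_ofReal_regularizedDensity hf0 hf1 hc.le)
      _ ≤ (ENNReal.ofReal δ + ENNReal.ofReal (2 * c)) ^ (1 / 2 : ℝ) := by
          gcongr
          exact (lintegral_abs_mul_regularizedDensity_sub_le hρm hρ0 hρ1 hc.le).trans
            (by gcongr)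
      _ = ENNReal.ofReal √(δ + 2 * c) := by
          rw [← ENNReal.ofReal_add hδ0 (by positivity),
            ENNReal.ofReal_rpow_of_nonneg (by positivity) (by norm_num), Real.sqrt_eq_rpow]
  have hm : Measurable fun x =>
      |√(ρ x * regularizedDensity c f (T x) / regularizedDensity c f x) - 1| :=
    (((hρm.mul (hwm.comp hT)).div hwm).sqrt.sub_const 1).abs
  rw [integral_eq_lintegral_of_nonneg_ae (ae_of_all _ fun _ => abs_nonneg _)
    hm.aestronglyMeasurable]
  exact ENNReal.toReal_le_of_le_ofReal (Real.sqrt_nonneg _) hlin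

end RegularizedDensity

theorem exists_asymptotically_invariant_measures_general
    {G X : Type*}
    [Group G] [TopologicalSpace G] [IsTopologicalGroup G]
    [MeasurableSpace G]
    [MeasurableSpace X]
    [MulAction G X] (hact : Measurable fun p : G × X => p.1 • p.2)
    (μ : Measure X) [IsProbabilityMeasure μ]
    -- the Radon–Nikodym cocycle of the action
    (χ : G → X → ℝ)
    (hχmeas : Measurable fun p : G × X => χ p.1 p.2)
    (hχnonneg : ∀ g x, 0 ≤ χ g x)
    (hχRN : ∀ g : G, ∀ f : X → ℝ≥0∞, Measurable f →
      ∫⁻ x, f (g • x) * ENNReal.ofReal (χ g x) ∂μ = ∫⁻ x, f x ∂μ)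
    -- the pair `(G, X)` is amenable
    (f : ℕ → X → ℝ)
    (hfmeas : ∀ n, Measurable (f n)) (hfnonneg : ∀ n x, 0 ≤ f n x)
    (hfint : ∀ n, ∫ x, f n x ∂μ = 1)
    (hfinv : ∀ K : Set G, IsCompact K → ∀ ε : ℝ, 0 < ε → ∃ N : ℕ, ∀ n ≥ N, ∀ g ∈ K,
      ∫ x, |f n (g⁻¹ • x) * χ g⁻¹ x - f n x| ∂μ ≤ ε) :
    ∃ (μn : ℕ → Measure X) (χn : ℕ → G → X → ℝ),
      (∀ n, IsProbabilityMeasure (μn n)) ∧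
      -- (a) each `μ_n` is equivalent to `μ`
      (∀ n, μn n ≪ μ ∧ μ ≪ μn n) ∧
      (∀ n, Measurable fun p : G × X => χn n p.1 p.2) ∧
      (∀ n g x, 0 ≤ χn n g x) ∧
      -- (b) `χ_n` is a Radon–Nikodym cocycle for the action with respect to `μ_n`
      (∀ n, ∀ g : G, ∀ f' : X → ℝ≥0∞, Measurable f' →
        ∫⁻ x, f' (g • x) * ENNReal.ofReal (χn n g x) ∂(μn n) = ∫⁻ x, f' x ∂(μn n)) ∧
      -- (c) asymptotic invariance, uniformly on compact sets
      (∀ K : Set G, IsCompact K → ∀ ε : ℝ, 0 < ε → ∃ N : ℕ, ∀ n ≥ N, ∀ g ∈ K,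
        ∫ x, |Real.sqrt (χn n g x) - 1| ∂(μn n) ≤ ε) := by
  set w : ℕ → X → ℝ := fun n => regularizedDensity ((1 / 2 : ℝ) ^ n) (f n)
  have hc : ∀ n, 0 < (1 / 2 : ℝ) ^ n := fun n => by positivity
  have hw0 : ∀ n x, 0 < w n x := fun n => regularizedDensity_pos (hfnonneg n) (hc n)
  have hwm : ∀ n, Measurable (w n) := fun n => (hfmeas n).regularizedDensity
  have hsmul : ∀ g : G, Measurable fun x : X => g • x := fun g => hact.comp measurable_prodMk_left
  have hχg : ∀ g : G, Measurable (χ g) := fun g => hχmeas.comp measurable_prodMk_left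
  refine ⟨fun n => μ.withDensity fun x => ENNReal.ofReal (w n x),
    fun n g x => χ g x * w n (g • x) / w n x,
    fun n => isProbabilityMeasure_withDensity_ofReal
      (lintegral_ofReal_regularizedDensity (hfnonneg n) (hfint n) (hc n).le),
    fun n => ⟨withDensity_absolutelyContinuous _ _,
      absolutelyContinuous_withDensity_ofReal (hwm n) (hw0 n)⟩,
    fun n => (hχmeas.mul ((hwm n).comp hact)).div ((hwm n).comp measurable_snd),
    fun n g x => div_nonneg (mul_nonneg (hχnonneg g x) (hw0 n _).le) (hw0 n x).le,
    fun n g F hF => lintegral_comp_mul_ofReal_div_withDensity (hχRN g) (hwm n) (hw0 n) hF, ?_⟩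
  intro K hK ε hε
  obtain ⟨N₁, hN₁⟩ := hfinv K⁻¹ hK.inv (ε ^ 2 / 2) (by positivity)
  obtain ⟨N₂, hN₂⟩ := exists_pow_lt_of_lt_one (by positivity : 0 < ε ^ 2 / 4)
    (by norm_num : (1 / 2 : ℝ) < 1)
  refine ⟨max N₁ N₂, fun n hn g hg => ?_⟩
  have hfg : ∫ x, |f n (g • x) * χ g x - f n x| ∂μ ≤ ε ^ 2 / 2 := by
    simpa using hN₁ n (le_of_max_le_left hn) g⁻¹ (inv_mem_inv.2 hg)
  have hcn : (1 / 2 : ℝ) ^ n ≤ ε ^ 2 / 4 :=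
    (pow_le_pow_of_le_one (by norm_num) (by norm_num) (le_of_max_le_right hn)).trans hN₂.le
  calc _ ≤ √(ε ^ 2 / 2 + 2 * (1 / 2 : ℝ) ^ n) :=
        integral_abs_sqrt_mul_regularizedDensity_div_sub_one_le (hsmul g) (hχg g) (hχnonneg g)
          (hχRN g) (hfmeas n) (hfnonneg n) (hfint n) (hc n) hfg
    _ ≤ √(ε ^ 2) := Real.sqrt_le_sqrt (by linarith)
    _ = ε := Real.sqrt_sq hε.le

/-- Lemma 2.2: if the pair `(G, X)` is amenable, witnessed by an asymptotically invariant
sequence `(f_n)` of densities, then there are probability measures `μ_n ∼ μ` with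
Radon–Nikodym cocycles `χ_n` such that `sup_{g ∈ K} ∫ |√(χ_n(g, x)) − 1| dμ_n → 0` for
every compact `K ⊆ G`. -/
theorem exists_asymptotically_invariant_measures
    {G X : Type*}
    [Group G] [TopologicalSpace G] [IsTopologicalGroup G] [LocallyCompactSpace G]
    [SecondCountableTopology G] [T2Space G] [MeasurableSpace G] [BorelSpace G]
    [MeasurableSpace X] [StandardBorelSpace X]
    [MulAction G X] (hact : Measurable fun p : G × X => p.1 • p.2)
    (μ : Measure X) [IsProbabilityMeasure μ]
    -- the Radon–Nikodym cocycle of the action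
    (χ : G → X → ℝ)
    (hχmeas : Measurable fun p : G × X => χ p.1 p.2)
    (hχnonneg : ∀ g x, 0 ≤ χ g x)
    (hχRN : ∀ g : G, ∀ f : X → ℝ≥0∞, Measurable f →
      ∫⁻ x, f (g • x) * ENNReal.ofReal (χ g x) ∂μ = ∫⁻ x, f x ∂μ)
    (hχcoc : ∀ g h : G, ∀ᵐ x ∂μ, χ (g * h) x = χ g (h • x) * χ h x)
    -- the pair `(G, X)` is amenable
    (f : ℕ → X → ℝ)
    (hfmeas : ∀ n, Measurable (f n)) (hfnonneg : ∀ n x, 0 ≤ f n x)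
    (hfint : ∀ n, ∫ x, f n x ∂μ = 1)
    (hfinv : ∀ K : Set G, IsCompact K → ∀ ε : ℝ, 0 < ε → ∃ N : ℕ, ∀ n ≥ N, ∀ g ∈ K,
      ∫ x, |f n (g⁻¹ • x) * χ g⁻¹ x - f n x| ∂μ ≤ ε) :
    ∃ (μn : ℕ → Measure X) (χn : ℕ → G → X → ℝ),
      (∀ n, IsProbabilityMeasure (μn n)) ∧
      -- (a) each `μ_n` is equivalent to `μ`
      (∀ n, μn n ≪ μ ∧ μ ≪ μn n) ∧
      (∀ n, Measurable fun p : G × X => χn n p.1 p.2) ∧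
      (∀ n g x, 0 ≤ χn n g x) ∧
      -- (b) `χ_n` is a Radon–Nikodym cocycle for the action with respect to `μ_n`
      (∀ n, ∀ g : G, ∀ f' : X → ℝ≥0∞, Measurable f' →
        ∫⁻ x, f' (g • x) * ENNReal.ofReal (χn n g x) ∂(μn n) = ∫⁻ x, f' x ∂(μn n)) ∧
      -- (c) asymptotic invariance, uniformly on compact sets
      (∀ K : Set G, IsCompact K → ∀ ε : ℝ, 0 < ε → ∃ N : ℕ, ∀ n ≥ N, ∀ g ∈ K,
        ∫ x, |Real.sqrt (χn n g x) - 1| ∂(μn n) ≤ ε) :=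
  exists_asymptotically_invariant_measures_general hact μ χ hχmeas hχnonneg hχRN f hfmeas hfnonneg
    hfint hfinv
end

section
/- Let C ≥ 1 and ε > 0, let K ⊆ G and L ⊆ H be sets, let A ⊆ X be a Borel set, and let u : H → ℂ be a Borel function. Assume: (1) |u(h)| ≤ C for all h ∈ H; (2) α(g, x) ∈ L for all g ∈ K and x ∈ A; (3) |u(h) − 1| ≤ ε/4 for all h ∈ L; (4) μ(X ∖ A) ≤ ε/(4(C+1)); (5) for every g ∈ K, ∫_X |√(χ(g, x)) − 1| dμ(x) ≤ ε/(4(C+1)). Then for every g ∈ K, |û(g) − 1| ≤ ε, where û(g) = ∫_X u(α(g, x))·√(χ(g, x)) dμ(x). -/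
/-!
Since `μ` is a probability measure, `û(g) − 1` splits as
`∫ u(α(g, x)) (√χ(g, x) − 1) dμ + ∫ (u(α(g, x)) − 1) dμ`.
The first term is at most `C ∫ |√χ(g, ·) − 1| ≤ ε/4`; the second is at most `ε/4` on `A`
(where `α(g, x) ∈ L`) plus `(C + 1) μ(X ∖ A) ≤ ε/4` off `A`. Integrability of `√χ(g, ·)` comes
from `∫ χ(g, ·) dμ = 1`, the Radon–Nikodym identity applied to `f = 1`.
-/

open MeasureTheory Filter Set
open scoped ENNReal

lemma ENNReal.ofReal_sqrt_le_ofReal_add_one (t : ℝ) : ENNReal.ofReal √t ≤ ENNReal.ofReal t + 1 := by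
  rcases le_or_gt t 1 with ht | ht
  · exact (ENNReal.ofReal_le_one.2 (Real.sqrt_le_one.2 ht)).trans le_add_self
  · have hsqrt : √t ≤ t := (Real.sqrt_le_left (by linarith)).2 (by nlinarith)
    exact (ENNReal.ofReal_le_ofReal hsqrt).trans le_self_add

namespace MeasureTheory

variable {X : Type*} [MeasurableSpace X] {μ : Measure X}

lemma integrable_sqrt_of_lintegral_ofReal_ne_top [IsFiniteMeasure μ] {f : X → ℝ}
    (hf : Measurable f) (hfin : ∫⁻ x, ENNReal.ofReal (f x) ∂μ ≠ ∞) :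
    Integrable (fun x => √(f x)) μ := by
  refine ⟨hf.sqrt.aestronglyMeasurable, ?_⟩
  rw [hasFiniteIntegral_iff_ofReal (Eventually.of_forall fun x => Real.sqrt_nonneg _)]
  calc ∫⁻ x, ENNReal.ofReal √(f x) ∂μ ≤ ∫⁻ x, (ENNReal.ofReal (f x) + 1) ∂μ :=
        lintegral_mono fun x => ENNReal.ofReal_sqrt_le_ofReal_add_one (f x)
    _ = ∫⁻ x, ENNReal.ofReal (f x) ∂μ + μ univ := by
        rw [lintegral_add_right _ measurable_const, lintegral_one]
    _ < ∞ := ENNReal.add_lt_top.2 ⟨hfin.lt_top, measure_lt_top μ univ⟩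

lemma norm_integral_le_add_of_norm_le_on_of_norm_le_on_compl [IsFiniteMeasure μ]
    {E : Type*} [NormedAddCommGroup E] [NormedSpace ℝ E] {f : X → E} {A : Set X} {a b : ℝ}
    (hA : MeasurableSet A) (hf : Integrable f μ)
    (ha : ∀ x ∈ A, ‖f x‖ ≤ a) (hb : ∀ x ∈ Aᶜ, ‖f x‖ ≤ b) :
    ‖∫ x, f x ∂μ‖ ≤ a * μ.real A + b * μ.real Aᶜ := by
  rw [← integral_add_compl hA hf]
  exact (norm_add_le _ _).trans (add_le_add
    (norm_setIntegral_le_of_norm_le_const (measure_lt_top μ A) ha)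
    (norm_setIntegral_le_of_norm_le_const (measure_lt_top μ Aᶜ) hb))

lemma norm_integral_mul_ofReal_sub_one_le [IsProbabilityMeasure μ] {v : X → ℂ} {s : X → ℝ}
    {A : Set X} {C η : ℝ} (hA : MeasurableSet A) (hv : AEStronglyMeasurable v μ)
    (hvC : ∀ x, ‖v x‖ ≤ C) (hvA : ∀ x ∈ A, ‖v x - 1‖ ≤ η) (hs : Integrable s μ) :
    ‖(∫ x, v x * (s x : ℂ) ∂μ) - 1‖
      ≤ C * ∫ x, |s x - 1| ∂μ + (η * μ.real A + (C + 1) * μ.real Aᶜ) := by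
  have hv₁C : ∀ x, ‖v x - 1‖ ≤ C + 1 := fun x =>
    (norm_sub_le _ _).trans (by rw [norm_one]; linarith [hvC x])
  have hs₁ : Integrable (fun x => s x - 1) μ := hs.sub (integrable_const 1)
  have hvs₁ : Integrable (fun x => v x * ((s x - 1 : ℝ) : ℂ)) μ :=
    hs₁.ofReal.bdd_mul hv (Eventually.of_forall hvC)
  have hv₁ : Integrable (fun x => v x - 1) μ :=
    .of_bound (hv.sub aestronglyMeasurable_const) (C + 1) (Eventually.of_forall hv₁C)
  have hsplit : (∫ x, v x * (s x : ℂ) ∂μ) - 1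
      = (∫ x, v x * ((s x - 1 : ℝ) : ℂ) ∂μ) + ∫ x, (v x - 1) ∂μ := by
    have hpt : ∀ x, v x * (s x : ℂ) = v x * ((s x - 1 : ℝ) : ℂ) + (v x - 1) + 1 := by
      intro x; push_cast; ring
    simp_rw [hpt]
    rw [integral_add (by exact hvs₁.add hv₁) (integrable_const 1), integral_add hvs₁ hv₁]
    simp
  have hfirst : ‖∫ x, v x * ((s x - 1 : ℝ) : ℂ) ∂μ‖ ≤ C * ∫ x, |s x - 1| ∂μ := by
    rw [← integral_const_mul]
    refine norm_integral_le_of_norm_le (hs₁.abs.const_mul C) (Eventually.of_forall fun x => ?_)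
    rw [norm_mul, Complex.norm_real, Real.norm_eq_abs]
    exact mul_le_mul_of_nonneg_right (hvC x) (abs_nonneg _)
  have hsecond : ‖∫ x, (v x - 1) ∂μ‖ ≤ η * μ.real A + (C + 1) * μ.real Aᶜ :=
    norm_integral_le_add_of_norm_le_on_of_norm_le_on_compl hA hv₁ hvA fun x _ => hv₁C x
  rw [hsplit]
  exact (norm_add_le _ _).trans (add_le_add hfirst hsecond)

end MeasureTheory

theorem uhat_close_to_one_general
    {G H X : Type*}
    [Group G] [MeasurableSpace G]
    [MeasurableSpace H]
    [MeasurableSpace X]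
    [MulAction G X]
    (μ : Measure X) [IsProbabilityMeasure μ]
    -- the Radon–Nikodym cocycle of the action
    (χ : G → X → ℝ)
    (hχmeas : Measurable fun p : G × X => χ p.1 p.2)
    (hχRN : ∀ g : G, ∀ f : X → ℝ≥0∞, Measurable f →
      ∫⁻ x, f (g • x) * ENNReal.ofReal (χ g x) ∂μ = ∫⁻ x, f x ∂μ)
    -- the Borel cocycle
    (α : G → X → H)
    (hαmeas : Measurable fun p : G × X => α p.1 p.2)
    (C ε : ℝ) (hC : 1 ≤ C) (hε : 0 < ε)
    (K : Set G) (L : Set H) (A : Set X) (hA : MeasurableSet A)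
    (u : H → ℂ) (humeas : Measurable u)
    -- (1) `|u| ≤ C`
    (hubdd : ∀ h : H, ‖u h‖ ≤ C)
    -- (2) `α(K × A) ⊆ L`
    (hαKA : ∀ g ∈ K, ∀ x ∈ A, α g x ∈ L)
    -- (3) `|u − 1| ≤ ε/4` on `L`
    (huL : ∀ h ∈ L, ‖u h - 1‖ ≤ ε / 4)
    -- (4) `μ(X ∖ A) ≤ ε/(4(C+1))`
    (hAc : μ (Set.univ \ A) ≤ ENNReal.ofReal (ε / (4 * (C + 1))))
    -- (5) `∫ |√(χ(g, ·)) − 1| dμ ≤ ε/(4(C+1))` for `g ∈ K`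
    (hχK : ∀ g ∈ K, ∫ x, |Real.sqrt (χ g x) - 1| ∂μ ≤ ε / (4 * (C + 1))) :
    ∀ g ∈ K, ‖(∫ x, u (α g x) * (Real.sqrt (χ g x) : ℂ) ∂μ) - 1‖ ≤ ε := by
  intro g hg
  set δ := ε / (4 * (C + 1)) with hδ_def
  have hδ : 0 ≤ δ := div_nonneg hε.le (by linarith)
  have hCδ : (C + 1) * δ = ε / 4 := by rw [hδ_def]; field_simp
  have hχg_int : ∫⁻ x, ENNReal.ofReal (χ g x) ∂μ = 1 := by
    simpa using hχRN g 1 measurable_const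
  have hsqrt : Integrable (fun x => √(χ g x)) μ :=
    integrable_sqrt_of_lintegral_ofReal_ne_top (hχmeas.comp measurable_prodMk_left)
      (by simp [hχg_int])
  have hAc_real : μ.real Aᶜ ≤ δ :=
    ENNReal.toReal_le_of_le_ofReal hδ (by rwa [compl_eq_univ_sdiff])
  have hA_real : μ.real A ≤ 1 := measureReal_le_one
  calc ‖(∫ x, u (α g x) * (√(χ g x) : ℂ) ∂μ) - 1‖
      ≤ C * ∫ x, |√(χ g x) - 1| ∂μ + (ε / 4 * μ.real A + (C + 1) * μ.real Aᶜ) :=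
        norm_integral_mul_ofReal_sub_one_le hA
          (humeas.comp (hαmeas.comp measurable_prodMk_left)).aestronglyMeasurable
          (fun x => hubdd _) (fun x hx => huL _ (hαKA g hg x hx)) hsqrt
    _ ≤ C * δ + (ε / 4 * 1 + (C + 1) * δ) := by
        gcongr
        exact hχK g hg
    _ ≤ ε := by nlinarith

/-- The key quantitative estimate in the proof of Theorem 1.5: if `|u| ≤ C` on `H`,
`α(K × A) ⊆ L`, `|u − 1| ≤ ε/4` on `L`, `μ(X ∖ A) ≤ ε/(4(C+1))` and
`∫ |√(χ(g, ·)) − 1| dμ ≤ ε/(4(C+1))` for `g ∈ K`, then `|û(g) − 1| ≤ ε` for every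
`g ∈ K`, where `û(g) = ∫_X u(α(g, x))·√(χ(g, x)) dμ(x)`. -/
theorem uhat_close_to_one
    {G H X : Type*}
    [Group G] [TopologicalSpace G] [IsTopologicalGroup G] [LocallyCompactSpace G]
    [SecondCountableTopology G] [T2Space G] [MeasurableSpace G] [BorelSpace G]
    [Group H] [TopologicalSpace H] [IsTopologicalGroup H] [LocallyCompactSpace H]
    [SecondCountableTopology H] [T2Space H] [MeasurableSpace H] [BorelSpace H]
    [MeasurableSpace X] [StandardBorelSpace X]
    [MulAction G X] (hact : Measurable fun p : G × X => p.1 • p.2)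
    (μ : Measure X) [IsProbabilityMeasure μ]
    -- the Radon–Nikodym cocycle of the action
    (χ : G → X → ℝ)
    (hχmeas : Measurable fun p : G × X => χ p.1 p.2)
    (hχnonneg : ∀ g x, 0 ≤ χ g x)
    (hχRN : ∀ g : G, ∀ f : X → ℝ≥0∞, Measurable f →
      ∫⁻ x, f (g • x) * ENNReal.ofReal (χ g x) ∂μ = ∫⁻ x, f x ∂μ)
    -- the Borel cocycle
    (α : G → X → H)
    (hαmeas : Measurable fun p : G × X => α p.1 p.2)
    (C ε : ℝ) (hC : 1 ≤ C) (hε : 0 < ε)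
    (K : Set G) (L : Set H) (A : Set X) (hA : MeasurableSet A)
    (u : H → ℂ) (humeas : Measurable u)
    -- (1) `|u| ≤ C`
    (hubdd : ∀ h : H, ‖u h‖ ≤ C)
    -- (2) `α(K × A) ⊆ L`
    (hαKA : ∀ g ∈ K, ∀ x ∈ A, α g x ∈ L)
    -- (3) `|u − 1| ≤ ε/4` on `L`
    (huL : ∀ h ∈ L, ‖u h - 1‖ ≤ ε / 4)
    -- (4) `μ(X ∖ A) ≤ ε/(4(C+1))`
    (hAc : μ (Set.univ \ A) ≤ ENNReal.ofReal (ε / (4 * (C + 1))))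
    -- (5) `∫ |√(χ(g, ·)) − 1| dμ ≤ ε/(4(C+1))` for `g ∈ K`
    (hχK : ∀ g ∈ K, ∫ x, |Real.sqrt (χ g x) - 1| ∂μ ≤ ε / (4 * (C + 1))) :
    ∀ g ∈ K, ‖(∫ x, u (α g x) * (Real.sqrt (χ g x) : ℂ) ∂μ) - 1‖ ≤ ε :=
  uhat_close_to_one_general μ χ hχmeas hχRN α hαmeas C ε hC hε K L A hA u humeas hubdd hαKA huL hAc
    hχK
end

section
/- Let F ⊆ Δ be a finite set containing the identity, let A ⊆ X be a Borel set with σ(A) < ∞, and let ε > 0. Then there exist a Borel set A_ε ⊆ A with σ(A ∖ A_ε) < ε and a finite set K ⊆ Γ such that ⋃_{δ ∈ F} A_ε·δ ⊆ ⋃_{γ ∈ K} γ·Y. -/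
open MeasureTheory Filter Set

/-- Lemma 3.1(b1): for a finite set `1 ∈ F ⊆ Δ`, a Borel set `A ⊆ X` of finite measure and
`ε > 0`, there are a Borel set `A_ε ⊆ A` with `σ(A ∖ A_ε) < ε` and a finite set `K ⊆ Γ`
such that `⋃_{δ ∈ F} A_ε·δ ⊆ ⋃_{γ ∈ K} γ·Y`. -/
theorem proper_cocycle_ME_part_b1
    {Γ Δ Ω : Type*}
    [Group Γ] [Countable Γ] [Group Δ] [Countable Δ]
    [MeasurableSpace Δ] [MeasurableSingletonClass Δ]
    [MeasurableSpace Ω] [StandardBorelSpace Ω]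
    (m : Measure Ω) [SigmaFinite m]
    -- the left action of Γ : measure preserving
    [MulAction Γ Ω]
    (hΓmp : ∀ γ : Γ, MeasurePreserving (fun s : Ω => γ • s) m m)
    -- the right action of Δ : measure preserving
    (r : Ω → Δ → Ω)
    (hr1 : ∀ s, r s 1 = s)
    (hrmul : ∀ s δ₁ δ₂, r s (δ₁ * δ₂) = r (r s δ₁) δ₂)
    (hΔmp : ∀ δ : Δ, MeasurePreserving (fun s => r s δ) m m)
    -- the two actions commute and are free
    (hcomm : ∀ (γ : Γ) (s : Ω) (δ : Δ), γ • r s δ = r (γ • s) δ)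
    (hΓfree : ∀ (γ : Γ) (s : Ω), γ • s = s → γ = 1)
    (hΔfree : ∀ (δ : Δ) (s : Ω), r s δ = s → δ = 1)
    -- `X` is a strict fundamental domain for the Δ-action
    (X : Set Ω) (hXmeas : MeasurableSet X)
    (hXfund : ∀ s : Ω, ∃! δ : Δ, r s δ ∈ X)
    -- `Y` is a strict fundamental domain for the Γ-action
    (Y : Set Ω) (hYmeas : MeasurableSet Y)
    (hYfund : ∀ s : Ω, ∃! γ : Γ, γ⁻¹ • s ∈ Y)
    -- the cocycle `α`
    (α : Γ → Ω → Δ)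
    (hαmeas : ∀ γ : Γ, Measurable (α γ))
    (hα : ∀ γ : Γ, ∀ x ∈ X, r (γ • x) (α γ x)⁻¹ ∈ X)
    (F : Finset Δ) (hF : (1 : Δ) ∈ F)
    (A : Set Ω) (hAX : A ⊆ X) (hAmeas : MeasurableSet A) (hAfin : m A < ⊤)
    (ε : ℝ) (hε : 0 < ε) :
    ∃ Aε : Set Ω, Aε ⊆ A ∧ MeasurableSet Aε ∧ m (A \ Aε) < ENNReal.ofReal ε ∧
      ∃ K : Finset Γ,
        (⋃ δ ∈ F, (fun x : Ω => r x δ) '' Aε) ⊆ ⋃ γ ∈ K, (fun y : Ω => γ • y) '' Y := by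
  classical
  obtain ⟨f, hf⟩ := exists_surjective_nat Γ
  -- the increasing approximating sets
  set S : ℕ → Set Ω := fun n =>
    A ∩ ⋂ δ ∈ F, ⋃ i ∈ Finset.range (n + 1), (fun x => (f i)⁻¹ • r x δ) ⁻¹' Y with hS
  have hSmeas : ∀ n, MeasurableSet (S n) := by
    intro n
    refine hAmeas.inter ?_
    refine MeasurableSet.biInter (F : Set Δ).to_countable fun δ _ => ?_
    refine MeasurableSet.biUnion (Finset.range (n + 1) : Set ℕ).to_countable fun i _ => ?_
    exact ((hΓmp (f i)⁻¹).measurable.comp (hΔmp δ).measurable) hYmeas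
  have hSsub : ∀ n, S n ⊆ A := fun n => inter_subset_left
  have hSmono : Monotone S := by
    intro a b hab
    refine inter_subset_inter_right _ (iInter₂_mono fun δ _ => iUnion₂_mono' fun i hi => ?_)
    exact ⟨i, Finset.mem_range.mpr (lt_of_lt_of_le (Finset.mem_range.mp hi) (by omega)),
      subset_rfl⟩
  have hSunion : A ⊆ ⋃ n, S n := by
    intro x hx
    -- for each δ ∈ F choose an index
    have hchoice : ∀ δ : Δ, ∃ i : ℕ, (f i)⁻¹ • r x δ ∈ Y := by
      intro δ
      obtain ⟨γ, hγ, -⟩ := hYfund (r x δ)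
      obtain ⟨i, rfl⟩ := hf γ
      exact ⟨i, hγ⟩
    choose g hg using hchoice
    obtain ⟨n, hn⟩ : ∃ n : ℕ, ∀ δ ∈ F, g δ ≤ n := by
      refine ⟨(F.image g).sup id, fun δ hδ => ?_⟩
      exact Finset.le_sup (f := id) (Finset.mem_image_of_mem g hδ)
    refine mem_iUnion.mpr ⟨n, hx, ?_⟩
    refine mem_iInter₂.mpr fun δ hδ => ?_
    exact mem_iUnion₂.mpr ⟨g δ, Finset.mem_range.mpr (by have := hn δ hδ; omega), hg δ⟩
  -- measures of the complements tend to 0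
  have hdecr : Antitone fun n => A \ S n := fun a b hab => diff_subset_diff_right (hSmono hab)
  have hiInter : ⋂ n, A \ S n = ∅ := by
    rw [← diff_iUnion]
    exact diff_eq_empty.mpr hSunion
  have htendsto :
      Tendsto (fun n => m (A \ S n)) atTop (nhds (m (⋂ n, A \ S n))) := by
    refine tendsto_measure_iInter_atTop (fun n => (hAmeas.diff (hSmeas n)).nullMeasurableSet)
      hdecr ⟨0, ?_⟩
    exact ((measure_mono diff_subset).trans_lt hAfin).ne
  rw [hiInter, measure_empty] at htendsto
  have : ∀ᶠ n in atTop, m (A \ S n) < ENNReal.ofReal ε := by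
    refine htendsto.eventually_lt_const ?_
    simpa using hε
  obtain ⟨n, hn⟩ := this.exists
  refine ⟨S n, hSsub n, hSmeas n, hn, (Finset.range (n + 1)).image f, ?_⟩
  rintro y hy
  simp only [mem_iUnion, mem_image] at hy
  obtain ⟨δ, hδ, x, hx, rfl⟩ := hy
  obtain ⟨-, hx2⟩ := hx
  have := mem_iInter₂.mp hx2 δ hδ
  obtain ⟨i, hi, hiY⟩ := mem_iUnion₂.mp this
  refine mem_iUnion₂.mpr ⟨f i, Finset.mem_image_of_mem f hi, ⟨(f i)⁻¹ • r x δ, hiY, ?_⟩⟩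
  simp
end

section
/- Let F ⊆ Δ be a finite set containing the identity, let A ⊆ X, and let K ⊆ Γ be a finite set such that ⋃_{δ ∈ F} A·δ ⊆ ⋃_{γ ∈ K} γ·Y. Then for every γ ∈ Γ with γ ∉ K·K⁻¹, the set {x ∈ A : γ∗x ∈ A and α(γ, x) ∈ F} is empty. -/
open MeasureTheory Filter Set

/-- Lemma 3.1(b2): if `1 ∈ F ⊆ Δ` is finite, `A ⊆ X` and `K ⊆ Γ` is a finite set with
`⋃_{δ ∈ F} A·δ ⊆ ⋃_{γ ∈ K} γ·Y`, then for every `γ ∉ K·K⁻¹` the set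
`X_A(γ) = {x ∈ A : γ∗x ∈ A, α(γ, x) ∈ F}` is empty. -/
theorem proper_cocycle_ME_part_b2
    {Γ Δ Ω : Type*}
    [Group Γ] [Countable Γ] [Group Δ] [Countable Δ]
    [MeasurableSpace Δ] [MeasurableSingletonClass Δ]
    [MeasurableSpace Ω] [StandardBorelSpace Ω]
    -- the left action of Γ
    [MulAction Γ Ω]
    -- the right action of Δ
    (r : Ω → Δ → Ω)
    (hr1 : ∀ s, r s 1 = s)
    (hrmul : ∀ s δ₁ δ₂, r s (δ₁ * δ₂) = r (r s δ₁) δ₂)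
    -- the two actions commute and are free
    (hcomm : ∀ (γ : Γ) (s : Ω) (δ : Δ), γ • r s δ = r (γ • s) δ)
    (hΓfree : ∀ (γ : Γ) (s : Ω), γ • s = s → γ = 1)
    (hΔfree : ∀ (δ : Δ) (s : Ω), r s δ = s → δ = 1)
    -- `X` is a strict fundamental domain for the Δ-action
    (X : Set Ω) (hXmeas : MeasurableSet X)
    (hXfund : ∀ s : Ω, ∃! δ : Δ, r s δ ∈ X)
    -- `Y` is a strict fundamental domain for the Γ-action
    (Y : Set Ω) (hYmeas : MeasurableSet Y)
    (hYfund : ∀ s : Ω, ∃! γ : Γ, γ⁻¹ • s ∈ Y)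
    -- the cocycle `α`
    (α : Γ → Ω → Δ)
    (hαmeas : ∀ γ : Γ, Measurable (α γ))
    (hα : ∀ γ : Γ, ∀ x ∈ X, r (γ • x) (α γ x)⁻¹ ∈ X)
    (F : Finset Δ) (hF : (1 : Δ) ∈ F)
    (A : Set Ω) (hAX : A ⊆ X)
    (K : Finset Γ)
    (hcover : (⋃ δ ∈ F, (fun x : Ω => r x δ) '' A) ⊆ ⋃ γ ∈ K, (fun y : Ω => γ • y) '' Y) :
    ∀ γ : Γ, γ ∉ {g : Γ | ∃ k ∈ K, ∃ k' ∈ K, g = k * k'⁻¹} →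
      {x : Ω | x ∈ A ∧ r (γ • x) (α γ x)⁻¹ ∈ A ∧ α γ x ∈ F} = ∅ := by
  intro γ hγ
  rw [Set.eq_empty_iff_forall_notMem]
  rintro x ⟨hxA, hgxA, hαF⟩
  apply hγ
  -- x itself is covered: x = r x 1 with 1 ∈ F
  have hx : x ∈ ⋃ γ ∈ K, (fun y : Ω => γ • y) '' Y := by
    apply hcover
    exact Set.mem_biUnion hF ⟨x, hxA, hr1 x⟩
  -- γ • x is covered: γ • x = r (γ∗x) (α γ x)
  have hgx : γ • x ∈ ⋃ γ ∈ K, (fun y : Ω => γ • y) '' Y := by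
    apply hcover
    refine Set.mem_biUnion hαF ⟨r (γ • x) (α γ x)⁻¹, hgxA, ?_⟩
    show r (r (γ • x) (α γ x)⁻¹) (α γ x) = γ • x
    rw [← hrmul, inv_mul_cancel, hr1]
  simp only [Set.mem_iUnion, Set.mem_image] at hx hgx
  obtain ⟨k, hk, y, hy, hky⟩ := hx
  obtain ⟨k', hk', y', hy', hk'y'⟩ := hgx
  refine ⟨k', hk', k, hk, ?_⟩
  -- uniqueness at s = γ • x : both k' and γ * k work
  have h1 : k'⁻¹ • (γ • x) ∈ Y := by rw [← hk'y', inv_smul_smul]; exact hy'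
  have h2 : (γ * k)⁻¹ • (γ • x) ∈ Y := by
    rw [mul_inv_rev, mul_smul, inv_smul_smul, ← hky, inv_smul_smul]; exact hy
  obtain ⟨g, -, hg⟩ := hYfund (γ • x)
  have := (hg k' h1).trans (hg (γ * k) h2).symm
  rw [this, mul_inv_cancel_right]
end
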